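/- arXiv:2303.13834 — 6 statements merged into one kernel-verified Lean document; each statement's English description precedes it below -/
import Mathlib

section
/- Let h: ℝ → ℝ be increasing with m|x−y| ≤ |h(x)−h(y)| ≤ M|x−y| for all x,y and constants 0 < m ≤ M. Define H(x,ν) = ∫ h(x+z) dν(z) for ν a probability measure on ℝ with finite first moment, and G₀(ν) = inf{x ≥ 0 : H(x,ν) ≥ 0}. Then G₀ is Lipschitz with respect to the Wasserstein-1 distance: |G₀(μ) − G₀(ν)| ≤ (M/m) W₁(μ,ν) for all μ,ν with finite first moment. -/
/-!
Monotonicity of `h` together with the lower bound `m |x - y| ≤ |h x - h y|` says that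
`x ↦ h x - m x` is monotone, and integrating in `z` the same holds for `x ↦ H(x, ρ) - m x`.
On the other hand `h / M` is 1-Lipschitz, so `|H(x, μ) - H(x, ν)| ≤ M W₁(μ, ν)` for every `x`.
If two functions grow at rate at least `m` and differ by at most `δ` everywhere, their first
nonnegative zero crossings differ by at most `δ / m`: shifting a point of one superlevel set by
`δ / m` lands in the other.
-/

open MeasureTheory Set

open scoped NNReal

section Threshold

variable {m δ : ℝ} {F F₁ F₂ : ℝ → ℝ}

lemma nonempty_nonneg_superlevel_of_monotone_sub_mul (hm : 0 < m)
    (hF : Monotone fun x => F x - m * x) : {x : ℝ | 0 ≤ x ∧ 0 ≤ F x}.Nonempty := by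
  refine ⟨max 0 (-F 0 / m), le_max_left _ _, ?_⟩
  have hgrowth := hF (le_max_left 0 (-F 0 / m))
  have hscale : m * (-F 0 / m) ≤ m * max 0 (-F 0 / m) :=
    mul_le_mul_of_nonneg_left (le_max_right _ _) hm.le
  rw [mul_div_cancel₀ _ hm.ne'] at hscale
  simp only [mul_zero, sub_zero] at hgrowth
  linarith

lemma sInf_nonneg_superlevel_le_add (hm : 0 < m) (hδ : 0 ≤ δ)
    (hF₁ : Monotone fun x => F₁ x - m * x) (hF₂ : Monotone fun x => F₂ x - m * x)
    (hle : ∀ x, F₂ x ≤ F₁ x + δ) :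
    sInf {x : ℝ | 0 ≤ x ∧ 0 ≤ F₁ x} ≤ sInf {x : ℝ | 0 ≤ x ∧ 0 ≤ F₂ x} + δ / m := by
  rw [← sub_le_iff_le_add]
  refine le_csInf (nonempty_nonneg_superlevel_of_monotone_sub_mul hm hF₂) ?_
  rintro x ⟨hx, hF₂x⟩
  rw [sub_le_iff_le_add]
  have hshift : 0 ≤ δ / m := div_nonneg hδ hm.le
  refine csInf_le ⟨0, fun y hy => hy.1⟩ ⟨by linarith, ?_⟩
  have hgrowth := hF₁ (le_add_of_nonneg_right hshift : x ≤ x + δ / m)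
  have hδm : m * (δ / m) = δ := mul_div_cancel₀ _ hm.ne'
  linarith [hle x]

lemma abs_sInf_nonneg_superlevel_sub_le (hm : 0 < m)
    (hF₁ : Monotone fun x => F₁ x - m * x) (hF₂ : Monotone fun x => F₂ x - m * x)
    (hclose : ∀ x, |F₁ x - F₂ x| ≤ δ) :
    |sInf {x : ℝ | 0 ≤ x ∧ 0 ≤ F₁ x} - sInf {x : ℝ | 0 ≤ x ∧ 0 ≤ F₂ x}| ≤ δ / m := by
  have hδ : 0 ≤ δ := (abs_nonneg _).trans (hclose 0)
  rw [abs_sub_le_iff, sub_le_iff_le_add', sub_le_iff_le_add']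
  exact ⟨sInf_nonneg_superlevel_le_add hm hδ hF₁ hF₂ fun x => by linarith [abs_le.1 (hclose x)],
    sInf_nonneg_superlevel_le_add hm hδ hF₂ hF₁ fun x => by linarith [abs_le.1 (hclose x)]⟩

end Threshold

section Integrals

variable {ρ : Measure ℝ} {K : ℝ≥0} {g : ℝ → ℝ}

lemma LipschitzWith.integrable_of_integrable_abs [IsFiniteMeasure ρ] (hg : LipschitzWith K g)
    (hρ : Integrable (fun z => |z|) ρ) : Integrable g ρ := by
  refine Integrable.mono' ((integrable_const |g 0|).add (hρ.const_mul K))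
    hg.continuous.aestronglyMeasurable (ae_of_all _ fun z => ?_)
  have hz := hg.dist_le_mul z 0
  rw [Real.dist_eq, Real.dist_eq, sub_zero] at hz
  simp only [Pi.add_apply, Real.norm_eq_abs]
  linarith [abs_sub_abs_le_abs_sub (g z) (g 0)]

lemma LipschitzWith.abs_integral_sub_apply_zero_le [IsProbabilityMeasure ρ]
    (hg : LipschitzWith K g) (hρ : Integrable (fun z => |z|) ρ) :
    |∫ z, g z ∂ρ - g 0| ≤ K * ∫ z, |z| ∂ρ := by
  have hgρ := hg.integrable_of_integrable_abs hρ
  calc |∫ z, g z ∂ρ - g 0| = |∫ z, (g z - g 0) ∂ρ| := by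
        rw [integral_sub hgρ (integrable_const _), integral_const, probReal_univ, one_smul]
    _ ≤ ∫ z, |g z - g 0| ∂ρ := abs_integral_le_integral_abs
    _ ≤ ∫ z, K * |z| ∂ρ := by
        refine integral_mono (hgρ.sub (integrable_const _)).abs (hρ.const_mul K) fun z => ?_
        simpa only [Real.dist_eq, sub_zero] using hg.dist_le_mul z 0
    _ = K * ∫ z, |z| ∂ρ := integral_const_mul _ _

end Integrals

noncomputable def wassersteinOne (μ ν : Measure ℝ) : ℝ :=
  sSup {d : ℝ | ∃ g : ℝ → ℝ, LipschitzWith 1 g ∧ d = |(∫ z, g z ∂μ) - ∫ z, g z ∂ν|}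

section Wasserstein

variable {μ ν : Measure ℝ} [IsProbabilityMeasure μ] [IsProbabilityMeasure ν]

lemma bddAbove_wassersteinOne_set (hμ : Integrable (fun z => |z|) μ)
    (hν : Integrable (fun z => |z|) ν) :
    BddAbove {d : ℝ | ∃ g : ℝ → ℝ, LipschitzWith 1 g ∧ d = |(∫ z, g z ∂μ) - ∫ z, g z ∂ν|} := by
  refine ⟨(∫ z, |z| ∂μ) + ∫ z, |z| ∂ν, ?_⟩
  rintro d ⟨g, hg, rfl⟩
  have hgμ := hg.abs_integral_sub_apply_zero_le hμ
  have hgν := hg.abs_integral_sub_apply_zero_le hν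
  rw [NNReal.coe_one, one_mul] at hgμ hgν
  calc |(∫ z, g z ∂μ) - ∫ z, g z ∂ν| = |(∫ z, g z ∂μ - g 0) - (∫ z, g z ∂ν - g 0)| := by
        rw [sub_sub_sub_cancel_right]
    _ ≤ |∫ z, g z ∂μ - g 0| + |∫ z, g z ∂ν - g 0| := abs_sub _ _
    _ ≤ (∫ z, |z| ∂μ) + ∫ z, |z| ∂ν := add_le_add hgμ hgν

lemma LipschitzWith.abs_integral_sub_integral_le_wassersteinOne {K : ℝ≥0} {g : ℝ → ℝ}
    (hg : LipschitzWith K g) (hμ : Integrable (fun z => |z|) μ)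
    (hν : Integrable (fun z => |z|) ν) :
    |(∫ z, g z ∂μ) - ∫ z, g z ∂ν| ≤ K * wassersteinOne μ ν := by
  rcases eq_or_ne K 0 with rfl | hK
  · have hconst : ∀ z, g z = g 0 := fun z => by
      simpa [dist_le_zero] using hg.dist_le_mul z 0
    simp [hconst]
  · have hscaled : LipschitzWith 1 fun z => (K : ℝ)⁻¹ * g z := by
      refine LipschitzWith.of_dist_le_mul fun a b => ?_
      rw [Real.dist_eq, ← mul_sub, abs_mul, abs_inv, NNReal.abs_eq, NNReal.coe_one, one_mul,
        inv_mul_le_iff₀ (by positivity)]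
      exact hg.dist_le_mul a b
    have hle := le_csSup (bddAbove_wassersteinOne_set hμ hν) ⟨_, hscaled, rfl⟩
    rw [integral_const_mul, integral_const_mul, ← mul_sub, abs_mul,
      abs_of_nonneg (inv_nonneg.2 K.coe_nonneg)] at hle
    rw [← inv_mul_le_iff₀ (by positivity)]
    exact hle

end Wasserstein

lemma monotone_sub_mul_of_mul_abs_le (m : ℝ) {h : ℝ → ℝ} (hmono : Monotone h)
    (hlow : ∀ x y, m * |x - y| ≤ |h x - h y|) : Monotone fun x => h x - m * x := by
  intro x y hxy
  have hdiff := hlow y x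
  rw [abs_of_nonneg (sub_nonneg.2 hxy), abs_of_nonneg (sub_nonneg.2 (hmono hxy))] at hdiff
  dsimp only
  linarith

lemma monotone_integral_comp_add_sub_mul {ρ : Measure ℝ} [IsProbabilityMeasure ρ] {m : ℝ}
    {h : ℝ → ℝ} (hgrowth : Monotone fun x => h x - m * x)
    (hint : ∀ x, Integrable (fun z => h (x + z)) ρ) :
    Monotone fun x => ∫ z, h (x + z) ∂ρ - m * x := by
  intro x y hxy
  have hsub_const : ∀ a, ∫ z, h (a + z) ∂ρ - m * a = ∫ z, (h (a + z) - m * a) ∂ρ := fun a => by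
    rw [integral_sub (hint a) (integrable_const _), integral_const, probReal_univ, one_smul]
  dsimp only
  rw [hsub_const, hsub_const]
  refine integral_mono ((hint x).sub (integrable_const _)) ((hint y).sub (integrable_const _))
    fun z => ?_
  have hz := hgrowth (by linarith : x + z ≤ y + z)
  dsimp only at hz ⊢
  linarith

theorem stmt0_general
    (m M : ℝ) (hm : 0 < m)
    (h : ℝ → ℝ) (hmono : Monotone h)
    (hbil : ∀ x y : ℝ, m * |x - y| ≤ |h x - h y| ∧ |h x - h y| ≤ M * |x - y|)
    (μ ν : Measure ℝ) [IsProbabilityMeasure μ] [IsProbabilityMeasure ν]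
    (hμ : Integrable (fun z : ℝ => |z|) μ) (hν : Integrable (fun z : ℝ => |z|) ν)
    (H : ℝ → Measure ℝ → ℝ)
    (hH : ∀ (x : ℝ) (ρ : Measure ℝ), H x ρ = ∫ z, h (x + z) ∂ρ)
    (G₀ : Measure ℝ → ℝ)
    (hG : ∀ ρ : Measure ℝ, G₀ ρ = sInf {x : ℝ | 0 ≤ x ∧ 0 ≤ H x ρ})
    (W₁ : Measure ℝ → Measure ℝ → ℝ)
    (hW : ∀ ρ₁ ρ₂ : Measure ℝ, W₁ ρ₁ ρ₂ =
      sSup {d : ℝ | ∃ g : ℝ → ℝ, LipschitzWith 1 g ∧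
        d = |(∫ z, g z ∂ρ₁) - ∫ z, g z ∂ρ₂|}) :
    |G₀ μ - G₀ ν| ≤ (M / m) * W₁ μ ν := by
  obtain rfl : W₁ = wassersteinOne := funext₂ hW
  have hM : 0 ≤ M := by simpa using (abs_nonneg _).trans (hbil 1 0).2
  have hlip : LipschitzWith M.toNNReal h := LipschitzWith.of_dist_le' fun x y => (hbil x y).2
  have hlip_shift (x : ℝ) : LipschitzWith M.toNNReal fun z => h (x + z) := by
    have hcomp := hlip.comp (isometry_add_left x).lipschitz
    rwa [mul_one] at hcomp
  have hgrowth := monotone_sub_mul_of_mul_abs_le m hmono fun x y => (hbil x y).1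
  have hgrowth_H {ρ : Measure ℝ} [IsProbabilityMeasure ρ] (hρ : Integrable (fun z => |z|) ρ) :
      Monotone fun x => H x ρ - m * x := by
    simp_rw [hH]
    exact monotone_integral_comp_add_sub_mul hgrowth fun x =>
      (hlip_shift x).integrable_of_integrable_abs hρ
  have hclose (x : ℝ) : |H x μ - H x ν| ≤ M * wassersteinOne μ ν := by
    simpa [hH, hM] using (hlip_shift x).abs_integral_sub_integral_le_wassersteinOne hμ hν
  rw [hG, hG, div_mul_eq_mul_div]
  exact abs_sInf_nonneg_superlevel_sub_le hm (hgrowth_H hμ) (hgrowth_H hν) hclose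

theorem stmt0
    (m M : ℝ) (hm : 0 < m) (hmM : m ≤ M)
    (h : ℝ → ℝ) (hmono : Monotone h)
    (hbil : ∀ x y : ℝ, m * |x - y| ≤ |h x - h y| ∧ |h x - h y| ≤ M * |x - y|)
    (μ ν : Measure ℝ) [IsProbabilityMeasure μ] [IsProbabilityMeasure ν]
    (hμ : Integrable (fun z : ℝ => |z|) μ) (hν : Integrable (fun z : ℝ => |z|) ν)
    (H : ℝ → Measure ℝ → ℝ)
    (hH : ∀ (x : ℝ) (ρ : Measure ℝ), H x ρ = ∫ z, h (x + z) ∂ρ)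
    (G₀ : Measure ℝ → ℝ)
    (hG : ∀ ρ : Measure ℝ, G₀ ρ = sInf {x : ℝ | 0 ≤ x ∧ 0 ≤ H x ρ})
    (W₁ : Measure ℝ → Measure ℝ → ℝ)
    (hW : ∀ ρ₁ ρ₂ : Measure ℝ, W₁ ρ₁ ρ₂ =
      sSup {d : ℝ | ∃ g : ℝ → ℝ, LipschitzWith 1 g ∧
        d = |(∫ z, g z ∂ρ₁) - ∫ z, g z ∂ρ₂|}) :
    |G₀ μ - G₀ ν| ≤ (M / m) * W₁ μ ν :=
  stmt0_general m M hm h hmono hbil μ ν hμ hν H hH G₀ hG W₁ hW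
end

section
/- Let b: ℝ → ℝ be Lipschitz, ξ ∈ ℝ, and K⁰ : [0,T] → ℝ a continuous nondecreasing function with K⁰(0)=0. For any φ ∈ L²([0,T],ℝ), the integral equation Y(t) = ξ + ∫₀ᵗ b(Y(s)) ds + ∫₀ᵗ σ(Y(s)) φ(s) ds + K⁰(t), with σ: ℝ → ℝ Lipschitz, has a unique continuous solution Y on [0,T]. -/
open MeasureTheory Set

/-!
Picard iteration in `C([0,T], ℝ)`. By the Lipschitz bounds the right-hand side `Φ` of the
equation satisfies `|ΦY t - ΦZ t| ≤ ∫₀ᵗ (L_b + L_σ |φ|) |Y - Z|`, and since this weight is in `L²`,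
Cauchy–Schwarz gives `(ΦY t - ΦZ t)² ≤ C ∫₀ᵗ (Y - Z)²`. Squaring keeps plain Lebesgue measure in
the recursion, so iterating yields `‖ΦⁿY - ΦⁿZ‖² ≤ (C T)ⁿ / n! · ‖Y - Z‖²`: some iterate of `Φ` is a
contraction, hence `Φ` has exactly one fixed point, and its fixed points are exactly the
continuous solutions.
-/

theorem sq_integral_mul_le_integral_sq_mul_integral_sq {α : Type*} [MeasurableSpace α]
    {μ : Measure α} {f g : α → ℝ} (hf : MemLp f 2 μ) (hg : MemLp g 2 μ) :
    (∫ a, f a * g a ∂μ) ^ 2 ≤ (∫ a, f a ^ 2 ∂μ) * ∫ a, g a ^ 2 ∂μ := by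
  have holder := integral_mul_norm_le_Lp_mul_Lq Real.HolderConjugate.two_two
    (by simpa using hf) (by simpa using hg)
  simp only [Real.norm_eq_abs, Real.rpow_two, sq_abs, ← Real.sqrt_eq_rpow] at holder
  calc (∫ a, f a * g a ∂μ) ^ 2 ≤ (∫ a, |f a| * |g a| ∂μ) ^ 2 := by
        rw [← sq_abs]
        gcongr
        simpa only [abs_mul] using abs_integral_le_integral_abs (f := fun a => f a * g a)
    _ ≤ (√(∫ a, f a ^ 2 ∂μ) * √(∫ a, g a ^ 2 ∂μ)) ^ 2 := by gcongr
    _ = (∫ a, f a ^ 2 ∂μ) * ∫ a, g a ^ 2 ∂μ := by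
        rw [mul_pow, Real.sq_sqrt (integral_nonneg fun a => sq_nonneg _),
          Real.sq_sqrt (integral_nonneg fun a => sq_nonneg _)]

section Volterra

variable {T C : ℝ} (hT : 0 ≤ T) {Φ : C(Icc 0 T, ℝ) → C(Icc 0 T, ℝ)}

theorem sq_iterate_sub_le (hC : 0 ≤ C)
    (hΦ : ∀ Y Z (t : Icc 0 T), (Φ Y t - Φ Z t) ^ 2 ≤
      C * ∫ s in (0:ℝ)..t, (IccExtend hT Y s - IccExtend hT Z s) ^ 2)
    (n : ℕ) (Y Z : C(Icc 0 T, ℝ)) (t : Icc 0 T) :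
    (Φ^[n] Y t - Φ^[n] Z t) ^ 2 ≤ dist Y Z ^ 2 * (C * t) ^ n / n.factorial := by
  induction n generalizing t with
  | zero =>
    simpa [Real.dist_eq, sq_abs] using
      pow_le_pow_left₀ dist_nonneg (ContinuousMap.dist_apply_le_dist (f := Y) (g := Z) t) 2
  | succ n ih =>
    have hbound : ∀ s ∈ Icc 0 (t : ℝ), (IccExtend hT (Φ^[n] Y) s - IccExtend hT (Φ^[n] Z) s) ^ 2
        ≤ dist Y Z ^ 2 * C ^ n / n.factorial * s ^ n := by
      intro s hs
      have hsT : s ∈ Icc 0 T := ⟨hs.1, hs.2.trans t.2.2⟩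
      rw [IccExtend_of_mem _ _ hsT, IccExtend_of_mem _ _ hsT]
      convert ih ⟨s, hsT⟩ using 1
      ring
    have hcont : Continuous fun s => (IccExtend hT (Φ^[n] Y) s - IccExtend hT (Φ^[n] Z) s) ^ 2 :=
      (((Φ^[n] Y).continuous.Icc_extend').sub (Φ^[n] Z).continuous.Icc_extend').pow 2
    calc (Φ^[n + 1] Y t - Φ^[n + 1] Z t) ^ 2
        ≤ C * ∫ s in (0:ℝ)..t, (IccExtend hT (Φ^[n] Y) s - IccExtend hT (Φ^[n] Z) s) ^ 2 := by
          rw [Function.iterate_succ_apply', Function.iterate_succ_apply']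
          exact hΦ _ _ t
      _ ≤ C * ∫ s in (0:ℝ)..t, dist Y Z ^ 2 * C ^ n / n.factorial * s ^ n := by
          gcongr
          exact intervalIntegral.integral_mono_on t.2.1 (hcont.intervalIntegrable _ _)
            ((by fun_prop : Continuous _).intervalIntegrable _ _) hbound
      _ = dist Y Z ^ 2 * (C * t) ^ (n + 1) / (n + 1).factorial := by
          rw [intervalIntegral.integral_const_mul, integral_pow, Nat.factorial_succ]
          push_cast
          field_simp
          ring

theorem existsUnique_isFixedPt_of_sq_sub_le (hC : 0 ≤ C)
    (hΦ : ∀ Y Z (t : Icc 0 T), (Φ Y t - Φ Z t) ^ 2 ≤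
      C * ∫ s in (0:ℝ)..t, (IccExtend hT Y s - IccExtend hT Z s) ^ 2) :
    ∃! Y, Function.IsFixedPt Φ Y := by
  obtain ⟨n, hn⟩ : ∃ n : ℕ, (C * T) ^ n / n.factorial < 1 :=
    ((FloorSemiring.tendsto_pow_div_factorial_atTop (C * T)).eventually_lt_const one_pos).exists
  have hcontr : ContractingWith (Real.toNNReal √((C * T) ^ n / n.factorial)) Φ^[n] := by
    refine ⟨Real.toNNReal_lt_one.2 ((Real.sqrt_lt' one_pos).2 (by simpa using hn)),
      LipschitzWith.of_dist_le_mul fun Y Z => ?_⟩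
    rw [Real.coe_toNNReal _ (Real.sqrt_nonneg _), ContinuousMap.dist_le (by positivity)]
    intro t
    rw [Real.dist_eq]
    refine abs_le_of_sq_le_sq ?_ (by positivity)
    calc (Φ^[n] Y t - Φ^[n] Z t) ^ 2 ≤ dist Y Z ^ 2 * (C * t) ^ n / n.factorial :=
          sq_iterate_sub_le hT hC hΦ n Y Z t
      _ ≤ dist Y Z ^ 2 * (C * T) ^ n / n.factorial := by
          have : 0 ≤ (t : ℝ) := t.2.1
          gcongr
          exact t.2.2
      _ = (√((C * T) ^ n / n.factorial) * dist Y Z) ^ 2 := by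
          rw [mul_pow _ (dist Y Z), Real.sq_sqrt (by positivity)]
          ring
  exact ⟨_, hcontr.isFixedPt_fixedPoint_iterate, fun Y hY =>
    hcontr.fixedPoint_unique' (hY.iterate n) (hcontr.isFixedPt_fixedPoint_iterate.iterate n)⟩

end Volterra

noncomputable def skeletonRhs (ξ : ℝ) (b σ K₀ φ Y : ℝ → ℝ) (t : ℝ) : ℝ :=
  ξ + (∫ s in (0:ℝ)..t, b (Y s)) + (∫ s in (0:ℝ)..t, σ (Y s) * φ s) + K₀ t

section Skeleton

variable {T t ξ : ℝ} {b σ K₀ φ Y Z : ℝ → ℝ}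

theorem skeletonRhs_congr (hYZ : EqOn Y Z (Icc 0 T)) (ht : t ∈ Icc 0 T) :
    skeletonRhs ξ b σ K₀ φ Y t = skeletonRhs ξ b σ K₀ φ Z t := by
  have hsub : uIcc 0 t ⊆ Icc 0 T := uIcc_subset_Icc (left_mem_Icc.2 (ht.1.trans ht.2)) ht
  unfold skeletonRhs
  rw [intervalIntegral.integral_congr fun s hs => congrArg b (hYZ (hsub hs)),
    intervalIntegral.integral_congr fun s hs => congrArg (σ · * φ s) (hYZ (hsub hs))]

theorem continuousOn_skeletonRhs (hT : 0 ≤ T) (hb : Continuous b) (hσ : Continuous σ)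
    (hK₀ : ContinuousOn K₀ (Icc 0 T)) (hφ : IntegrableOn φ (Icc 0 T))
    (hY : ContinuousOn Y (Icc 0 T)) :
    ContinuousOn (skeletonRhs ξ b σ K₀ φ Y) (Icc 0 T) := by
  have hprimitive {f : ℝ → ℝ} (hf : IntegrableOn f (Icc 0 T)) :
      ContinuousOn (fun t => ∫ s in (0:ℝ)..t, f s) (Icc 0 T) := by
    have := intervalIntegral.continuousOn_primitive_interval (a := 0) (b := T) (f := f)
      (by rwa [uIcc_of_le hT])
    rwa [uIcc_of_le hT] at this
  exact ((continuousOn_const.add (hprimitive (hb.comp_continuousOn hY).integrableOn_Icc)).add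
    (hprimitive (hφ.continuousOn_mul (hσ.comp_continuousOn hY) isCompact_Icc))).add hK₀

theorem abs_skeletonRhs_sub_le {Lb Lσ : NNReal} (hb : LipschitzWith Lb b)
    (hσ : LipschitzWith Lσ σ) (hφ : IntegrableOn φ (Icc 0 T))
    (hY : ContinuousOn Y (Icc 0 T)) (hZ : ContinuousOn Z (Icc 0 T)) (ht : t ∈ Icc 0 T) :
    |skeletonRhs ξ b σ K₀ φ Y t - skeletonRhs ξ b σ K₀ φ Z t| ≤
      ∫ s in (0:ℝ)..t, (Lb + Lσ * |φ s|) * |Y s - Z s| := by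
  have hsub : uIcc 0 t ⊆ Icc 0 T := uIcc_subset_Icc (left_mem_Icc.2 (ht.1.trans ht.2)) ht
  have hbY {W : ℝ → ℝ} (hW : ContinuousOn W (Icc 0 T)) :
      IntervalIntegrable (fun s => b (W s)) volume 0 t :=
    ((hb.continuous.comp_continuousOn hW).integrableOn_Icc.mono_set hsub).intervalIntegrable
  have hσY {W : ℝ → ℝ} (hW : ContinuousOn W (Icc 0 T)) :
      IntervalIntegrable (fun s => σ (W s) * φ s) volume 0 t :=
    ((hφ.continuousOn_mul (hσ.continuous.comp_continuousOn hW) isCompact_Icc).mono_set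
      hsub).intervalIntegrable
  have hweight : IntervalIntegrable (fun s => (Lb + Lσ * |φ s|) * |Y s - Z s|) volume 0 t :=
    ((((integrableOn_const measure_Icc_lt_top.ne).add (hφ.abs.const_mul _)).mul_continuousOn
      (hY.sub hZ).abs isCompact_Icc).mono_set hsub).intervalIntegrable
  have hdiff : skeletonRhs ξ b σ K₀ φ Y t - skeletonRhs ξ b σ K₀ φ Z t =
      ∫ s in (0:ℝ)..t, ((b (Y s) - b (Z s)) + (σ (Y s) * φ s - σ (Z s) * φ s)) := by
    simp only [skeletonRhs]
    rw [intervalIntegral.integral_add ((hbY hY).sub (hbY hZ)) ((hσY hY).sub (hσY hZ)),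
      intervalIntegral.integral_sub (hbY hY) (hbY hZ),
      intervalIntegral.integral_sub (hσY hY) (hσY hZ)]
    ring
  rw [hdiff]
  refine (intervalIntegral.abs_integral_le_integral_abs ht.1).trans
    (intervalIntegral.integral_mono_on ht.1 ?_ hweight fun s _ => ?_)
  · exact (((hbY hY).sub (hbY hZ)).add ((hσY hY).sub (hσY hZ))).abs
  calc |(b (Y s) - b (Z s)) + (σ (Y s) * φ s - σ (Z s) * φ s)|
      ≤ |b (Y s) - b (Z s)| + |σ (Y s) - σ (Z s)| * |φ s| := by
        rw [← sub_mul, ← abs_mul]; exact abs_add_le _ _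
    _ ≤ Lb * |Y s - Z s| + Lσ * |Y s - Z s| * |φ s| := by
        rw [← Real.dist_eq, ← Real.dist_eq, ← Real.dist_eq]
        gcongr
        exacts [hb.dist_le_mul _ _, hσ.dist_le_mul _ _]
    _ = (Lb + Lσ * |φ s|) * |Y s - Z s| := by ring

theorem sq_skeletonRhs_sub_le {Lb Lσ : NNReal} (hb : LipschitzWith Lb b)
    (hσ : LipschitzWith Lσ σ) (hφ : MemLp φ 2 (volume.restrict (Icc 0 T)))
    (hY : ContinuousOn Y (Icc 0 T)) (hZ : ContinuousOn Z (Icc 0 T)) (ht : t ∈ Icc 0 T) :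
    (skeletonRhs ξ b σ K₀ φ Y t - skeletonRhs ξ b σ K₀ φ Z t) ^ 2 ≤
      (∫ s in Icc 0 T, (Lb + Lσ * |φ s|) ^ 2) * ∫ s in (0:ℝ)..t, (Y s - Z s) ^ 2 := by
  have hIoc : Ioc 0 t ⊆ Icc 0 T := Ioc_subset_Icc_self.trans (Icc_subset_Icc le_rfl ht.2)
  have hweight : MemLp (fun s => (Lb : ℝ) + Lσ * |φ s|) 2 (volume.restrict (Icc 0 T)) :=
    (memLp_const (Lb : ℝ)).add (hφ.abs.const_mul (Lσ : ℝ))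
  obtain ⟨M, hM⟩ := isCompact_Icc.exists_bound_of_continuousOn (hY.sub hZ)
  have hdist : MemLp (fun s => |Y s - Z s|) 2 (volume.restrict (Ioc 0 t)) :=
    MemLp.of_bound (((hY.sub hZ).abs.mono hIoc).aestronglyMeasurable measurableSet_Ioc) M
      (ae_restrict_of_forall_mem measurableSet_Ioc fun s hs => by
        simpa only [norm_abs_eq_norm, Pi.sub_apply] using hM s (hIoc hs))
  rw [intervalIntegral.integral_of_le ht.1]
  calc _ ≤ (∫ s in (0:ℝ)..t, (Lb + Lσ * |φ s|) * |Y s - Z s|) ^ 2 := by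
        rw [← sq_abs]
        exact pow_le_pow_left₀ (abs_nonneg _)
          (abs_skeletonRhs_sub_le hb hσ (hφ.integrable one_le_two) hY hZ ht) 2
    _ ≤ (∫ s in Ioc 0 t, (Lb + Lσ * |φ s|) ^ 2) * ∫ s in Ioc 0 t, |Y s - Z s| ^ 2 := by
        rw [intervalIntegral.integral_of_le ht.1]
        exact sq_integral_mul_le_integral_sq_mul_integral_sq
          (hweight.mono_measure (Measure.restrict_mono hIoc le_rfl)) hdist
    _ ≤ _ := by
        simp only [sq_abs]
        exact mul_le_mul_of_nonneg_right
          (setIntegral_mono_set hweight.integrable_sq (ae_of_all _ fun s => sq_nonneg _)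
            hIoc.eventuallyLE)
          (setIntegral_nonneg measurableSet_Ioc fun s _ => sq_nonneg _)

noncomputable def skeletonPicard (hT : 0 ≤ T) (ξ : ℝ) (hb : Continuous b) (hσ : Continuous σ)
    (hK₀ : ContinuousOn K₀ (Icc 0 T)) (hφ : IntegrableOn φ (Icc 0 T)) (X : C(Icc 0 T, ℝ)) :
    C(Icc 0 T, ℝ) :=
  ⟨(Icc 0 T).domRestrict (skeletonRhs ξ b σ K₀ φ (IccExtend hT X)),
    (continuousOn_skeletonRhs hT hb hσ hK₀ hφ X.continuous.Icc_extend'.continuousOn).domRestrict⟩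

variable {hT : 0 ≤ T} {hb : Continuous b} {hσ : Continuous σ} {hK₀ : ContinuousOn K₀ (Icc 0 T)}
  {hφ : IntegrableOn φ (Icc 0 T)}

theorem IccExtend_eq_skeletonRhs_of_isFixedPt {X : C(Icc 0 T, ℝ)}
    (hX : Function.IsFixedPt (skeletonPicard hT ξ hb hσ hK₀ hφ) X) (ht : t ∈ Icc 0 T) :
    IccExtend hT X t = skeletonRhs ξ b σ K₀ φ (IccExtend hT X) t := by
  rw [IccExtend_of_mem _ _ ht]
  conv_lhs => rw [← hX]
  rfl

theorem isFixedPt_skeletonPicard_domRestrict (hY : ContinuousOn Y (Icc 0 T))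
    (hsol : ∀ t ∈ Icc 0 T, Y t = skeletonRhs ξ b σ K₀ φ Y t) :
    Function.IsFixedPt (skeletonPicard hT ξ hb hσ hK₀ hφ)
      ⟨(Icc 0 T).domRestrict Y, hY.domRestrict⟩ := by
  have hext : EqOn (IccExtend hT ((Icc 0 T).domRestrict Y)) Y (Icc 0 T) := fun t ht =>
    IccExtend_of_mem _ _ ht
  ext t
  exact (skeletonRhs_congr hext t.2).trans (hsol t t.2).symm

end Skeleton

theorem stmt4_general
    (T : ℝ) (hT : 0 < T) (ξ : ℝ)
    (b σ : ℝ → ℝ) (Lb Lσ : NNReal)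
    (hb : LipschitzWith Lb b) (hσ : LipschitzWith Lσ σ)
    (K₀ : ℝ → ℝ) (hK₀c : ContinuousOn K₀ (Icc 0 T))
    (φ : ℝ → ℝ) (hφ : MemLp φ 2 (volume.restrict (Icc (0:ℝ) T))) :
    (∃ Y : ℝ → ℝ, ContinuousOn Y (Icc 0 T) ∧
        ∀ t ∈ Icc (0:ℝ) T,
          Y t = ξ + (∫ s in (0:ℝ)..t, b (Y s)) + (∫ s in (0:ℝ)..t, σ (Y s) * φ s) + K₀ t) ∧
      ∀ Y Z : ℝ → ℝ,
        ContinuousOn Y (Icc 0 T) →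
        (∀ t ∈ Icc (0:ℝ) T,
          Y t = ξ + (∫ s in (0:ℝ)..t, b (Y s)) + (∫ s in (0:ℝ)..t, σ (Y s) * φ s) + K₀ t) →
        ContinuousOn Z (Icc 0 T) →
        (∀ t ∈ Icc (0:ℝ) T,
          Z t = ξ + (∫ s in (0:ℝ)..t, b (Z s)) + (∫ s in (0:ℝ)..t, σ (Z s) * φ s) + K₀ t) →
        ∀ t ∈ Icc (0:ℝ) T, Y t = Z t := by
  set Φ := skeletonPicard hT.le ξ hb.continuous hσ.continuous hK₀c (hφ.integrable one_le_two)
  obtain ⟨X, hX, hXunique⟩ : ∃! X, Function.IsFixedPt Φ X :=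
    existsUnique_isFixedPt_of_sq_sub_le hT.le (integral_nonneg fun s => sq_nonneg _)
      fun Y Z t => sq_skeletonRhs_sub_le hb hσ hφ Y.continuous.Icc_extend'.continuousOn
        Z.continuous.Icc_extend'.continuousOn t.2
  refine ⟨⟨IccExtend hT.le X, X.continuous.Icc_extend'.continuousOn,
    fun t ht => IccExtend_eq_skeletonRhs_of_isFixedPt hX ht⟩,
    fun Y Z hY hYsol hZ hZsol t ht => ?_⟩
  have hYX := hXunique _ (isFixedPt_skeletonPicard_domRestrict hY hYsol)
  have hZX := hXunique _ (isFixedPt_skeletonPicard_domRestrict hZ hZsol)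
  exact congrArg (fun W : C(Icc 0 T, ℝ) => W ⟨t, ht⟩) (hYX.trans hZX.symm)

theorem stmt4
    (T : ℝ) (hT : 0 < T) (ξ : ℝ)
    (b σ : ℝ → ℝ) (Lb Lσ : NNReal)
    (hb : LipschitzWith Lb b) (hσ : LipschitzWith Lσ σ)
    (K₀ : ℝ → ℝ) (hK₀c : ContinuousOn K₀ (Icc 0 T))
    (hK₀m : MonotoneOn K₀ (Icc 0 T)) (hK₀0 : K₀ 0 = 0)
    (φ : ℝ → ℝ) (hφ : MemLp φ 2 (volume.restrict (Icc (0:ℝ) T))) :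
    (∃ Y : ℝ → ℝ, ContinuousOn Y (Icc 0 T) ∧
        ∀ t ∈ Icc (0:ℝ) T,
          Y t = ξ + (∫ s in (0:ℝ)..t, b (Y s)) + (∫ s in (0:ℝ)..t, σ (Y s) * φ s) + K₀ t) ∧
      ∀ Y Z : ℝ → ℝ,
        ContinuousOn Y (Icc 0 T) →
        (∀ t ∈ Icc (0:ℝ) T,
          Y t = ξ + (∫ s in (0:ℝ)..t, b (Y s)) + (∫ s in (0:ℝ)..t, σ (Y s) * φ s) + K₀ t) →
        ContinuousOn Z (Icc 0 T) →
        (∀ t ∈ Icc (0:ℝ) T,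
          Z t = ξ + (∫ s in (0:ℝ)..t, b (Z s)) + (∫ s in (0:ℝ)..t, σ (Z s) * φ s) + K₀ t) →
        ∀ t ∈ Icc (0:ℝ) T, Y t = Z t :=
  stmt4_general T hT ξ b σ Lb Lσ hb hσ K₀ hK₀c φ hφ
end

section
/- Under the setting of the skeleton equation with b, σ Lipschitz and φ in the L² ball of radius N, the solutions Y^φ satisfy the uniform modulus-of-continuity estimate: for all 0 ≤ s < t ≤ T, |Y^φ(t) − Y^φ(s)|² ≤ C[(t−s)² + (t−s)] + C|K⁰(t) − K⁰(s)|², where C depends only on T, N, ξ, the Lipschitz constants and K⁰(T), but not on φ. -/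
open MeasureTheory Set

/-!
Grönwall's inequality, fed by the Cauchy–Schwarz bound `(∫ σ(Y) φ)² ≤ N ∫ σ(Y)²` and the linear
growth of the Lipschitz coefficients, bounds `Y²` on `[0, T]` by a constant `M` that does not
depend on `φ`. Given `Y² ≤ M`, the drift increment over `[s, t]` is `O(t - s)` and, by
Cauchy–Schwarz again, the square of the control increment is at most `2N(σ(0)² + Lσ² M)(t - s)`.
-/

theorem le_mul_exp_of_le_add_mul_integral {f : ℝ → ℝ} {T A B : ℝ} (hf : Continuous f)
    (hB : 0 ≤ B) (h : ∀ t ∈ Icc 0 T, f t ≤ A + B * ∫ s in (0:ℝ)..t, f s) :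
    ∀ t ∈ Icc 0 T, f t ≤ A * Real.exp (B * t) := by
  set g : ℝ → ℝ := fun t => A + B * ∫ s in (0:ℝ)..t, f s
  have hg : ∀ t, HasDerivAt g (B * f t) t := fun t =>
    ((intervalIntegral.integral_hasDerivAt_right (hf.intervalIntegrable _ _)
      (hf.stronglyMeasurableAtFilter _ _) hf.continuousAt).const_mul B).const_add A
  have hgron := le_gronwallBound_of_liminf_deriv_right_le (f := g) (a := 0) (b := T) (δ := A)
    (K := B) (ε := 0)
    (fun t _ => (hg t).continuousAt.continuousWithinAt)
    (fun t _ _ hr => (hg t).hasDerivWithinAt.liminf_right_slope_le hr) (by simp [g])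
    (fun t ht => by simpa using mul_le_mul_of_nonneg_left (h t (Ico_subset_Icc_self ht)) hB)
  intro t ht
  simpa [gronwallBound_ε0] using (h t ht).trans (hgron t ht)

theorem sq_integral_mul_le {α : Type*} [MeasurableSpace α] {μ : Measure α} {f g : α → ℝ}
    (hf : MemLp f 2 μ) (hg : MemLp g 2 μ) :
    (∫ x, f x * g x ∂μ) ^ 2 ≤ (∫ x, f x ^ 2 ∂μ) * ∫ x, g x ^ 2 ∂μ := by
  have key := real_inner_mul_inner_self_le (hf.toLp f) (hg.toLp g)
  simp only [L2.inner_def] at key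
  have e : ∀ {u v : α → ℝ} (hu : MemLp u 2 μ) (hv : MemLp v 2 μ),
      ∫ x, inner ℝ (hu.toLp u x) (hv.toLp v x) ∂μ = ∫ x, u x * v x ∂μ := by
    intro u v hu hv
    refine integral_congr_ae ?_
    filter_upwards [hu.coeFn_toLp, hv.coeFn_toLp] with x hu hv
    simp [hu, hv, mul_comm]
  rw [e hf hg, e hf hf, e hg hg] at key
  simpa [sq] using key

theorem LipschitzWith.sq_le_two_mul_sq_add {f : ℝ → ℝ} {L : NNReal} (hf : LipschitzWith L f)
    (y : ℝ) :
    f y ^ 2 ≤ 2 * (f 0 ^ 2 + (L * y) ^ 2) := by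
  have h : (f y - f 0) ^ 2 ≤ (L * y) ^ 2 := by
    rw [sq_le_sq, abs_mul, NNReal.abs_eq]
    simpa [Real.dist_eq] using hf.dist_le_mul y 0
  calc f y ^ 2 = (f 0 + (f y - f 0)) ^ 2 := by ring
    _ ≤ 2 * (f 0 ^ 2 + (f y - f 0) ^ 2) := add_sq_le
    _ ≤ 2 * (f 0 ^ 2 + (L * y) ^ 2) := by linarith

theorem sq_intervalIntegral_mul_le {f g : ℝ → ℝ} {a b : ℝ} (hab : a ≤ b)
    (hf : MemLp f 2 (volume.restrict (Ioc a b))) (hg : MemLp g 2 (volume.restrict (Ioc a b))) :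
    (∫ x in a..b, f x * g x) ^ 2 ≤ (∫ x in a..b, f x ^ 2) * ∫ x in a..b, g x ^ 2 := by
  simp only [intervalIntegral.integral_of_le hab]
  exact sq_integral_mul_le hf hg

theorem Continuous.memLp_two_restrict_Ioc {f : ℝ → ℝ} (hf : Continuous f) (a b : ℝ) :
    MemLp f 2 (volume.restrict (Ioc a b)) :=
  (memLp_two_iff_integrable_sq hf.aestronglyMeasurable).2 (hf.pow 2).integrableOn_Ioc

theorem sq_intervalIntegral_le {f : ℝ → ℝ} {a b : ℝ} (hab : a ≤ b) (hf : Continuous f) :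
    (∫ x in a..b, f x) ^ 2 ≤ (b - a) * ∫ x in a..b, f x ^ 2 := by
  simpa [hab, mul_comm] using sq_intervalIntegral_mul_le hab (hf.memLp_two_restrict_Ioc a b)
    (continuous_const.memLp_two_restrict_Ioc (f := fun _ => (1 : ℝ)) a b)

theorem sq_intervalIntegral_mul_le_of_integral_sq_le {f φ : ℝ → ℝ} {a b c d N : ℝ}
    (hca : c ≤ a) (hab : a ≤ b) (hbd : b ≤ d) (hf : Continuous f)
    (hφ : MemLp φ 2 (volume.restrict (Icc c d))) (hφN : ∫ x in c..d, φ x ^ 2 ≤ N) :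
    (∫ x in a..b, f x * φ x) ^ 2 ≤ N * ∫ x in a..b, f x ^ 2 := by
  have hφab : MemLp φ 2 (volume.restrict (Ioc a b)) :=
    hφ.mono_measure (Measure.restrict_mono (Ioc_subset_Icc_self.trans (Icc_subset_Icc hca hbd))
      le_rfl)
  have hφ_sq : ∫ x in a..b, φ x ^ 2 ≤ N := by
    refine le_trans (intervalIntegral.integral_mono_interval hca hab hbd
      (ae_of_all _ fun x => sq_nonneg (φ x)) ?_) hφN
    exact (intervalIntegrable_iff_integrableOn_Ioc_of_le (hca.trans (hab.trans hbd))).2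
      (IntegrableOn.mono_set hφ.integrable_sq Ioc_subset_Icc_self)
  calc (∫ x in a..b, f x * φ x) ^ 2
      ≤ (∫ x in a..b, f x ^ 2) * ∫ x in a..b, φ x ^ 2 :=
        sq_intervalIntegral_mul_le hab (hf.memLp_two_restrict_Ioc a b) hφab
    _ ≤ (∫ x in a..b, f x ^ 2) * N :=
        mul_le_mul_of_nonneg_left hφ_sq
          (intervalIntegral.integral_nonneg hab fun x _ => sq_nonneg _)
    _ = N * ∫ x in a..b, f x ^ 2 := mul_comm _ _

theorem LipschitzWith.intervalIntegral_sq_comp_le {f Z : ℝ → ℝ} {L : NNReal} {a b : ℝ}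
    (hf : LipschitzWith L f) (hZ : Continuous Z) (hab : a ≤ b) :
    ∫ x in a..b, f (Z x) ^ 2 ≤ 2 * (f 0 ^ 2 * (b - a) + L ^ 2 * ∫ x in a..b, Z x ^ 2) := by
  have hZ2 : IntervalIntegrable (fun x => Z x ^ 2) volume a b := (hZ.pow 2).intervalIntegrable _ _
  have hfZ2 : IntervalIntegrable (fun x => f (Z x) ^ 2) volume a b :=
    ((hf.continuous.comp hZ).pow 2).intervalIntegrable _ _
  calc ∫ x in a..b, f (Z x) ^ 2 ≤ ∫ x in a..b, 2 * (f 0 ^ 2 + L ^ 2 * Z x ^ 2) := by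
        refine intervalIntegral.integral_mono_on hab hfZ2
          ((intervalIntegrable_const.add (hZ2.const_mul _)).const_mul _) fun x _ => ?_
        simpa [mul_pow] using hf.sq_le_two_mul_sq_add (Z x)
    _ = 2 * (f 0 ^ 2 * (b - a) + L ^ 2 * ∫ x in a..b, Z x ^ 2) := by
        rw [intervalIntegral.integral_const_mul,
          intervalIntegral.integral_add intervalIntegrable_const (hZ2.const_mul _),
          intervalIntegral.integral_const, intervalIntegral.integral_const_mul, smul_eq_mul,
          mul_comm (b - a)]

theorem LipschitzWith.sq_intervalIntegral_comp_le {f Z : ℝ → ℝ} {L : NNReal} {a b : ℝ}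
    (hf : LipschitzWith L f) (hZ : Continuous Z) (hab : a ≤ b) :
    (∫ x in a..b, f (Z x)) ^ 2
      ≤ (b - a) * (2 * (f 0 ^ 2 * (b - a) + L ^ 2 * ∫ x in a..b, Z x ^ 2)) :=
  (sq_intervalIntegral_le hab (hf.continuous.comp hZ)).trans
    (mul_le_mul_of_nonneg_left (hf.intervalIntegral_sq_comp_le hZ hab) (sub_nonneg.2 hab))

theorem LipschitzWith.sq_intervalIntegral_comp_mul_le {f Z φ : ℝ → ℝ} {L : NNReal} {a b c d N : ℝ}
    (hf : LipschitzWith L f) (hZ : Continuous Z) (hN : 0 ≤ N) (hca : c ≤ a) (hab : a ≤ b)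
    (hbd : b ≤ d) (hφ : MemLp φ 2 (volume.restrict (Icc c d))) (hφN : ∫ x in c..d, φ x ^ 2 ≤ N) :
    (∫ x in a..b, f (Z x) * φ x) ^ 2
      ≤ N * (2 * (f 0 ^ 2 * (b - a) + L ^ 2 * ∫ x in a..b, Z x ^ 2)) :=
  (sq_intervalIntegral_mul_le_of_integral_sq_le hca hab hbd (hf.continuous.comp hZ) hφ hφN).trans
    (mul_le_mul_of_nonneg_left (hf.intervalIntegral_sq_comp_le hZ hab) hN)

section Skeleton

variable {T ξ N : ℝ} {b σ K₀ φ Z : ℝ → ℝ} {Lb Lσ : NNReal}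

theorem sq_le_of_skeleton (hb : LipschitzWith Lb b) (hσ : LipschitzWith Lσ σ) (hN : 0 ≤ N)
    (hZ : Continuous Z) (hφ : MemLp φ 2 (volume.restrict (Icc 0 T)))
    (hφN : ∫ s in (0:ℝ)..T, φ s ^ 2 ≤ N) (hK₀m : MonotoneOn K₀ (Icc 0 T)) (hK₀0 : K₀ 0 = 0)
    (hZeq : ∀ t ∈ Icc (0:ℝ) T,
      Z t = ξ + (∫ s in (0:ℝ)..t, b (Z s)) + (∫ s in (0:ℝ)..t, σ (Z s) * φ s) + K₀ t) :
    ∀ t ∈ Icc (0:ℝ) T, Z t ^ 2 ≤ (4 * (ξ ^ 2 + K₀ T ^ 2) + 8 * T * (T * b 0 ^ 2 + N * σ 0 ^ 2))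
      * Real.exp (8 * (T * Lb ^ 2 + N * Lσ ^ 2) * T) := by
  have hgronwall : ∀ u ∈ Icc (0:ℝ) T, Z u ^ 2 ≤ 4 * (ξ ^ 2 + K₀ T ^ 2)
      + 8 * T * (T * b 0 ^ 2 + N * σ 0 ^ 2)
      + 8 * (T * Lb ^ 2 + N * Lσ ^ 2) * ∫ s in (0:ℝ)..u, Z s ^ 2 := by
    intro u hu
    set I := ∫ s in (0:ℝ)..u, Z s ^ 2
    have hI : 0 ≤ I := intervalIntegral.integral_nonneg hu.1 fun _ _ => sq_nonneg _
    have hdrift := hb.sq_intervalIntegral_comp_le hZ hu.1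
    have hcontrol := hσ.sq_intervalIntegral_comp_mul_le hZ hN le_rfl hu.1 hu.2 hφ hφN
    have hK : K₀ u ^ 2 ≤ K₀ T ^ 2 := by
      have h0 : K₀ 0 ≤ K₀ u := hK₀m ⟨le_rfl, hu.1.trans hu.2⟩ hu hu.1
      exact pow_le_pow_left₀ (hK₀0 ▸ h0) (hK₀m hu ⟨hu.1.trans hu.2, le_rfl⟩ hu.2) 2
    simp only [sub_zero] at hdrift hcontrol
    have hu2 : u * (u * b 0 ^ 2) ≤ T * (T * b 0 ^ 2) :=
      mul_le_mul hu.2 (mul_le_mul_of_nonneg_right hu.2 (sq_nonneg _))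
        (mul_nonneg hu.1 (sq_nonneg _)) (hu.1.trans hu.2)
    have huI : u * (Lb ^ 2 * I) ≤ T * (Lb ^ 2 * I) := by gcongr; exact hu.2
    have huσ : N * (σ 0 ^ 2 * u) ≤ N * (σ 0 ^ 2 * T) := by gcongr; exact hu.2
    have hsum4 : ∀ w x y z : ℝ, (w + x + y + z) ^ 2 ≤ 4 * (w ^ 2 + x ^ 2 + y ^ 2 + z ^ 2) := by
      intro w x y z
      nlinarith [sq_nonneg (w - x), sq_nonneg (w - y), sq_nonneg (w - z), sq_nonneg (x - y),
        sq_nonneg (x - z), sq_nonneg (y - z)]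
    rw [hZeq u hu]
    nlinarith [hsum4 ξ (∫ s in (0:ℝ)..u, b (Z s)) (∫ s in (0:ℝ)..u, σ (Z s) * φ s) (K₀ u)]
  intro t ht
  have hT : 0 ≤ T := ht.1.trans ht.2
  calc Z t ^ 2 ≤ (4 * (ξ ^ 2 + K₀ T ^ 2) + 8 * T * (T * b 0 ^ 2 + N * σ 0 ^ 2))
        * Real.exp (8 * (T * Lb ^ 2 + N * Lσ ^ 2) * t) :=
      le_mul_exp_of_le_add_mul_integral (hZ.pow 2) (by positivity) hgronwall t ht
    _ ≤ _ := by gcongr; exact ht.2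

theorem sq_sub_le_of_skeleton (hb : LipschitzWith Lb b) (hσ : LipschitzWith Lσ σ) (hN : 0 ≤ N)
    (hZ : Continuous Z) (hφ : MemLp φ 2 (volume.restrict (Icc 0 T)))
    (hφN : ∫ s in (0:ℝ)..T, φ s ^ 2 ≤ N)
    (hZeq : ∀ t ∈ Icc (0:ℝ) T,
      Z t = ξ + (∫ s in (0:ℝ)..t, b (Z s)) + (∫ s in (0:ℝ)..t, σ (Z s) * φ s) + K₀ t)
    {M : ℝ} (hM : ∀ t ∈ Icc (0:ℝ) T, Z t ^ 2 ≤ M) {s t : ℝ} (hs : 0 ≤ s) (hst : s ≤ t)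
    (htT : t ≤ T) :
    (Z t - Z s) ^ 2 ≤ 3 * (2 * (b 0 ^ 2 + Lb ^ 2 * M) * (t - s) ^ 2
      + 2 * N * (σ 0 ^ 2 + Lσ ^ 2 * M) * (t - s) + (K₀ t - K₀ s) ^ 2) := by
  have hI : ∫ u in s..t, Z u ^ 2 ≤ M * (t - s) := by
    simpa [mul_comm] using intervalIntegral.integral_mono_on hst ((hZ.pow 2).intervalIntegrable _ _)
      (intervalIntegrable_const (μ := volume)) fun u hu => hM u ⟨hs.trans hu.1, hu.2.trans htT⟩
  have hT : 0 ≤ T := hs.trans (hst.trans htT)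
  have hb_int : ∀ r, IntervalIntegrable (fun u => b (Z u)) volume 0 r :=
    fun r => (hb.continuous.comp hZ).intervalIntegrable _ _
  have hσφ_int : ∀ r ∈ Icc (0:ℝ) T, IntervalIntegrable (fun u => σ (Z u) * φ u) volume 0 r := by
    intro r hr
    have hφ_int : IntervalIntegrable φ volume 0 T :=
      (intervalIntegrable_iff_integrableOn_Icc_of_le hT).2 (hφ.integrable one_le_two)
    refine (hφ_int.mono_set ?_).continuousOn_mul (hσ.continuous.comp hZ).continuousOn
    rw [uIcc_of_le hr.1, uIcc_of_le hT]
    exact Icc_subset_Icc_right hr.2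
  have hsm : s ∈ Icc (0:ℝ) T := ⟨hs, hst.trans htT⟩
  have htm : t ∈ Icc (0:ℝ) T := ⟨hs.trans hst, htT⟩
  have hdiff : Z t - Z s
      = (∫ u in s..t, b (Z u)) + (∫ u in s..t, σ (Z u) * φ u) + (K₀ t - K₀ s) := by
    rw [hZeq t htm, hZeq s hsm,
      ← intervalIntegral.integral_interval_sub_left (hb_int t) (hb_int s),
      ← intervalIntegral.integral_interval_sub_left (hσφ_int t htm) (hσφ_int s hsm)]
    ring
  have hdrift : (∫ u in s..t, b (Z u)) ^ 2 ≤ 2 * (b 0 ^ 2 + Lb ^ 2 * M) * (t - s) ^ 2 := by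
    refine (hb.sq_intervalIntegral_comp_le hZ hst).trans ?_
    calc (t - s) * (2 * (b 0 ^ 2 * (t - s) + Lb ^ 2 * ∫ u in s..t, Z u ^ 2))
        ≤ (t - s) * (2 * (b 0 ^ 2 * (t - s) + Lb ^ 2 * (M * (t - s)))) :=
          mul_le_mul_of_nonneg_left (by gcongr) (sub_nonneg.2 hst)
      _ = 2 * (b 0 ^ 2 + Lb ^ 2 * M) * (t - s) ^ 2 := by ring
  have hcontrol : (∫ u in s..t, σ (Z u) * φ u) ^ 2 ≤ 2 * N * (σ 0 ^ 2 + Lσ ^ 2 * M) * (t - s) := by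
    refine (hσ.sq_intervalIntegral_comp_mul_le hZ hN hs hst htT hφ hφN).trans ?_
    calc N * (2 * (σ 0 ^ 2 * (t - s) + Lσ ^ 2 * ∫ u in s..t, Z u ^ 2))
        ≤ N * (2 * (σ 0 ^ 2 * (t - s) + Lσ ^ 2 * (M * (t - s)))) := by gcongr
      _ = 2 * N * (σ 0 ^ 2 + Lσ ^ 2 * M) * (t - s) := by ring
  have hsum3 : ∀ x y z : ℝ, (x + y + z) ^ 2 ≤ 3 * (x ^ 2 + y ^ 2 + z ^ 2) := by
    intro x y z
    nlinarith [sq_nonneg (x - y), sq_nonneg (x - z), sq_nonneg (y - z)]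
  rw [hdiff]
  refine (hsum3 _ _ _).trans ?_
  gcongr

end Skeleton

theorem stmt6_general
    (T : ℝ) (ξ : ℝ) (N : ℝ)
    (b σ : ℝ → ℝ) (Lb Lσ : NNReal)
    (hb : LipschitzWith Lb b) (hσ : LipschitzWith Lσ σ)
    (K₀ : ℝ → ℝ)
    (hK₀m : MonotoneOn K₀ (Icc 0 T)) (hK₀0 : K₀ 0 = 0) :
    ∃ C : ℝ, ∀ φ : ℝ → ℝ,
      MemLp φ 2 (volume.restrict (Icc (0:ℝ) T)) →
      (∫ s in (0:ℝ)..T, (φ s) ^ 2) ≤ N →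
      ∀ Y : ℝ → ℝ, ContinuousOn Y (Icc 0 T) →
        (∀ t ∈ Icc (0:ℝ) T,
          Y t = ξ + (∫ s in (0:ℝ)..t, b (Y s)) + (∫ s in (0:ℝ)..t, σ (Y s) * φ s) + K₀ t) →
        ∀ s t : ℝ, 0 ≤ s → s < t → t ≤ T →
          |Y t - Y s| ^ 2 ≤ C * ((t - s) ^ 2 + (t - s)) + C * |K₀ t - K₀ s| ^ 2 := by
  set M := (4 * (ξ ^ 2 + K₀ T ^ 2) + 8 * T * (T * b 0 ^ 2 + N * σ 0 ^ 2))
    * Real.exp (8 * (T * Lb ^ 2 + N * Lσ ^ 2) * T)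
  set α := 2 * (b 0 ^ 2 + Lb ^ 2 * M)
  set β := 2 * N * (σ 0 ^ 2 + Lσ ^ 2 * M)
  refine ⟨3 * (α + β + 1), fun φ hφ hφN Y hYc hY s t hs hst htT => ?_⟩
  have hT : 0 ≤ T := by linarith
  have hN : 0 ≤ N := (intervalIntegral.integral_nonneg hT fun _ _ => sq_nonneg _).trans hφN
  set Z : ℝ → ℝ := fun u => Y (projIcc 0 T hT u)
  have hZY : EqOn Z Y (Icc 0 T) := fun u hu => by simp [Z, projIcc_of_mem hT hu]
  have hZ : Continuous Z :=
    hYc.comp_continuous (continuous_subtype_val.comp continuous_projIcc)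
      fun u => (projIcc 0 T hT u).2
  have hZeq : ∀ u ∈ Icc (0:ℝ) T,
      Z u = ξ + (∫ v in (0:ℝ)..u, b (Z v)) + (∫ v in (0:ℝ)..u, σ (Z v) * φ v) + K₀ u := by
    intro u hu
    have h := hZY.mono ((uIcc_of_le hu.1).trans_subset (Icc_subset_Icc_right hu.2))
    rw [intervalIntegral.integral_congr fun v hv => congrArg b (h hv),
      intervalIntegral.integral_congr fun v hv => congrArg (σ · * φ v) (h hv), hZY hu]
    exact hY u hu
  have hinc := sq_sub_le_of_skeleton hb hσ hN hZ hφ hφN hZeq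
    (sq_le_of_skeleton hb hσ hN hZ hφ hφN hK₀m hK₀0 hZeq) hs hst.le htT
  rw [← hZY ⟨hs.trans hst.le, htT⟩, ← hZY ⟨hs, hst.le.trans htT⟩, sq_abs, sq_abs]
  have hα : 0 ≤ α := by positivity
  have hβ : 0 ≤ β := by positivity
  have hts : 0 ≤ t - s := by linarith
  nlinarith [mul_nonneg hα hts, mul_nonneg hβ (sq_nonneg (t - s)),
    mul_nonneg (add_nonneg hα hβ) (sq_nonneg (K₀ t - K₀ s))]

theorem stmt6
    (T : ℝ) (hT : 0 < T) (ξ : ℝ) (N : ℝ) (hN : 0 < N)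
    (b σ : ℝ → ℝ) (Lb Lσ : NNReal)
    (hb : LipschitzWith Lb b) (hσ : LipschitzWith Lσ σ)
    (K₀ : ℝ → ℝ) (hK₀c : ContinuousOn K₀ (Icc 0 T))
    (hK₀m : MonotoneOn K₀ (Icc 0 T)) (hK₀0 : K₀ 0 = 0) :
    ∃ C : ℝ, ∀ φ : ℝ → ℝ,
      MemLp φ 2 (volume.restrict (Icc (0:ℝ) T)) →
      (∫ s in (0:ℝ)..T, (φ s) ^ 2) ≤ N →
      ∀ Y : ℝ → ℝ, ContinuousOn Y (Icc 0 T) →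
        (∀ t ∈ Icc (0:ℝ) T,
          Y t = ξ + (∫ s in (0:ℝ)..t, b (Y s)) + (∫ s in (0:ℝ)..t, σ (Y s) * φ s) + K₀ t) →
        ∀ s t : ℝ, 0 ≤ s → s < t → t ≤ T →
          |Y t - Y s| ^ 2 ≤ C * ((t - s) ^ 2 + (t - s)) + C * |K₀ t - K₀ s| ^ 2 :=
  stmt6_general T ξ N b σ Lb Lσ hb hσ K₀ hK₀m hK₀0
end

section
/- Let b : ℝ → ℝ be Lipschitz and h : ℝ → ℝ increasing bi-Lipschitz with constants 0 < m ≤ M, and ξ ∈ ℝ with h(ξ) ≥ 0. Then the mean reflected ODE X(t) = ξ + ∫₀ᵗ b(X(s)) ds + K(t) with constraints h(X(t)) ≥ 0 for all t and ∫₀ᵗ h(X(s)) dK(s) = 0, where K is continuous nondecreasing with K(0)=0, has at most one solution pair (X,K). -/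
open MeasureTheory Set

/-!
Fix `t` and let `σ ≤ t` be the last time with `X σ ≤ X' σ`. On `(σ, t]` we have
`h (X s) > h (X' s) ≥ 0`, so the flatness condition forces `K` to be constant there, while `K'`
can only increase. Hence `X t - X' t ≤ ∫_σ^t (b (X s) - b (X' s)) ds ≤ Lb ∫_0^t |X s - X' s| ds`,
and by symmetry `|X - X'|` satisfies an integral Grönwall inequality with zero initial term.
So `X = X'`, and the equation then gives `K = K'`.
-/

theorem ContinuousOn.exists_nonpos_forall_pos_Ioc {D : ℝ → ℝ} {a b : ℝ} (hab : a ≤ b)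
    (hD : ContinuousOn D (Icc a b)) (ha : D a ≤ 0) :
    ∃ σ ∈ Icc a b, D σ ≤ 0 ∧ ∀ s ∈ Ioc σ b, 0 < D s := by
  set S := Icc a b ∩ D ⁻¹' Iic 0
  have hS : IsCompact S :=
    isCompact_Icc.of_isClosed_subset
      (hD.preimage_isClosed_of_isClosed isClosed_Icc isClosed_Iic) inter_subset_left
  obtain ⟨σ, ⟨hσ, hDσ⟩, hσmax⟩ := hS.exists_isGreatest ⟨a, ⟨left_mem_Icc.2 hab, ha⟩⟩
  refine ⟨σ, hσ, hDσ, fun s hs => ?_⟩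
  by_contra! hDs
  exact (hσmax ⟨⟨hσ.1.trans hs.1.le, hs.2⟩, hDs⟩).not_gt hs.1

theorem StieltjesFunction.eq_of_setIntegral_Ioc_eq_zero {K : StieltjesFunction ℝ} {f : ℝ → ℝ}
    {a b : ℝ} (hab : a ≤ b) (hf : IntegrableOn f (Ioc a b) K.measure)
    (hpos : ∀ s ∈ Ioc a b, 0 < f s) (hzero : ∫ s in Ioc a b, f s ∂K.measure = 0) :
    K b = K a := by
  have hnull : K.measure (Ioc a b) = 0 := by
    have := (setIntegral_pos_iff_support_of_nonneg_ae
      (ae_restrict_of_forall_mem measurableSet_Ioc fun s hs => (hpos s hs).le) hf).not.1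
      hzero.le.not_gt
    rwa [not_lt, nonpos_iff_eq_zero,
      inter_eq_self_of_subset_right (show Ioc a b ⊆ Function.support f from
        fun s hs => (hpos s hs).ne')] at this
  rw [K.measure_Ioc, ENNReal.ofReal_eq_zero, sub_nonpos] at hnull
  exact le_antisymm hnull (K.mono hab)

theorem eqOn_zero_of_le_mul_integral {u : ℝ → ℝ} {L a b : ℝ} (hu : ContinuousOn u (Icc a b))
    (hu₀ : ∀ t ∈ Icc a b, 0 ≤ u t) (hle : ∀ t ∈ Icc a b, u t ≤ L * ∫ s in a..t, u s) :
    ∀ t ∈ Icc a b, u t = 0 := by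
  set G : ℝ → ℝ := fun t => ∫ s in a..t, u s
  have hG₀ : ∀ t ∈ Icc a b, 0 ≤ G t := fun t ht =>
    intervalIntegral.integral_nonneg ht.1 fun s hs => hu₀ s ⟨hs.1, hs.2.trans ht.2⟩
  have hG : ContinuousOn G (Icc a b) := by
    rcases lt_or_ge b a with hba | hab
    · simp [Icc_eq_empty_of_lt hba]
    rw [← uIcc_of_le hab] at hu ⊢
    exact intervalIntegral.continuousOn_primitive_interval (hu.integrableOn_compact isCompact_uIcc)
  have hG' : ∀ x ∈ Ico a b, HasDerivWithinAt G (u x) (Ici x) x := by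
    intro x hx
    have hIcc : Icc a b ∈ nhdsWithin x (Ioi x) := Icc_mem_nhdsGT_of_mem hx
    have hint : IntervalIntegrable u volume a x := (hu.mono (by
      rw [uIcc_of_le hx.1]; exact Icc_subset_Icc_right hx.2.le)).intervalIntegrable
    exact intervalIntegral.integral_hasDerivWithinAt_right hint
      ((hu.stronglyMeasurableAtFilter_nhdsWithin measurableSet_Icc x).filter_mono
        (nhdsWithin_le_of_mem hIcc))
      ((hu x (Ico_subset_Icc_self hx)).mono_of_mem_nhdsWithin hIcc)
  have hGzero := eq_zero_of_abs_deriv_le_mul_abs_self_of_eq_zero_right hG hG'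
    intervalIntegral.integral_same fun x hx => by
      rw [Real.norm_of_nonneg (hu₀ x (Ico_subset_Icc_self hx)),
        Real.norm_of_nonneg (hG₀ x (Ico_subset_Icc_self hx))]
      exact hle x (Ico_subset_Icc_self hx)
  intro t ht
  exact le_antisymm (by simpa [G, hGzero t ht] using hle t ht) (hu₀ t ht)

structure IsReflectedSolution (T ξ : ℝ) (b h X : ℝ → ℝ) (K : StieltjesFunction ℝ) : Prop where
  continuousOn : ContinuousOn X (Icc 0 T)
  map_zero : K 0 = 0
  eq_integral : ∀ t ∈ Icc (0:ℝ) T, X t = ξ + (∫ s in (0:ℝ)..t, b (X s)) + K t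
  nonneg : ∀ t ∈ Icc (0:ℝ) T, 0 ≤ h (X t)
  flat : ∀ t ∈ Icc (0:ℝ) T, ∫ s in Ioc (0:ℝ) t, h (X s) ∂K.measure = 0

namespace IsReflectedSolution

variable {T ξ : ℝ} {b h X X' : ℝ → ℝ} {K K' : StieltjesFunction ℝ} {σ t : ℝ}

theorem apply_zero (hS : IsReflectedSolution T ξ b h X K) (hT : 0 ≤ T) : X 0 = ξ := by
  simpa [hS.map_zero] using hS.eq_integral 0 (left_mem_Icc.2 hT)

theorem sub_eq_integral_add (hS : IsReflectedSolution T ξ b h X K) (hb : Continuous b)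
    (hσ : σ ∈ Icc 0 T) (ht : t ∈ Icc 0 T) :
    X t - X σ = (∫ s in σ..t, b (X s)) + (K t - K σ) := by
  have hint : ∀ r ∈ Icc (0:ℝ) T, IntervalIntegrable (fun s => b (X s)) volume 0 r :=
    fun r hr => ((hb.comp_continuousOn hS.continuousOn).mono
      (Icc_subset_Icc_right hr.2)).intervalIntegrable_of_Icc hr.1
  rw [hS.eq_integral t ht, hS.eq_integral σ hσ,
    ← intervalIntegral.integral_interval_sub_left (hint t ht) (hint σ hσ)]
  ring

theorem eq_of_pos_Ioc (hS : IsReflectedSolution T ξ b h X K) (hh : Continuous h)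
    (hσ : σ ∈ Icc 0 T) (ht : t ∈ Icc 0 T) (hσt : σ ≤ t) (hpos : ∀ s ∈ Ioc σ t, 0 < h (X s)) :
    K t = K σ := by
  have hint : IntegrableOn (fun s => h (X s)) (Ioc 0 t) K.measure :=
    ((hh.comp_continuousOn hS.continuousOn).integrableOn_compact isCompact_Icc).mono_set
      (Ioc_subset_Icc_self.trans (Icc_subset_Icc_right ht.2))
  refine K.eq_of_setIntegral_Ioc_eq_zero hσt (hint.mono_set (Ioc_subset_Ioc_left hσ.1)) hpos ?_
  have hsplit := setIntegral_union (Ioc_disjoint_Ioc_of_le le_rfl) measurableSet_Ioc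
    (hint.mono_set (Ioc_subset_Ioc_right hσt)) (hint.mono_set (Ioc_subset_Ioc_left hσ.1))
  rw [Ioc_union_Ioc_eq_Ioc hσ.1 hσt, hS.flat t ht, hS.flat σ hσ] at hsplit
  linarith

theorem sub_le_mul_integral_abs_sub (hS : IsReflectedSolution T ξ b h X K)
    (hS' : IsReflectedSolution T ξ b h X' K') {Lb : NNReal} (hb : LipschitzWith Lb b)
    (hh : Continuous h) (hsm : StrictMono h) (ht : t ∈ Icc 0 T) :
    X t - X' t ≤ Lb * ∫ s in (0:ℝ)..t, |X s - X' s| := by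
  have hT : 0 ≤ T := ht.1.trans ht.2
  have hsub : Icc 0 t ⊆ Icc 0 T := Icc_subset_Icc_right ht.2
  obtain ⟨σ, hσ, hDσ, hpos⟩ :=
    ContinuousOn.exists_nonpos_forall_pos_Ioc (D := fun s => X s - X' s) ht.1
    ((hS.continuousOn.sub hS'.continuousOn).mono hsub)
    (by simp [hS.apply_zero hT, hS'.apply_zero hT])
  have hσT : σ ∈ Icc 0 T := hsub hσ
  -- On `(σ, t]` the constraint is strictly inactive for `X`, so flatness freezes `K` there.
  have hKσ : K t = K σ := hS.eq_of_pos_Ioc hh hσT ht hσ.2 fun s hs =>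
    (hS'.nonneg s (hsub ⟨hσ.1.trans hs.1.le, hs.2⟩)).trans_lt (hsm (sub_pos.1 (hpos s hs)))
  have hintegrable : ∀ {f : ℝ → ℝ}, ContinuousOn f (Icc 0 T) → IntervalIntegrable f volume σ t :=
    fun hf => (hf.mono (uIcc_subset_Icc hσT ht)).intervalIntegrable
  have hbX : ContinuousOn (fun s => b (X s)) (Icc 0 T) :=
    hb.continuous.comp_continuousOn hS.continuousOn
  have hbX' : ContinuousOn (fun s => b (X' s)) (Icc 0 T) :=
    hb.continuous.comp_continuousOn hS'.continuousOn
  have hu : ContinuousOn (fun s => |X s - X' s|) (Icc 0 T) :=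
    (hS.continuousOn.sub hS'.continuousOn).abs
  calc X t - X' t ≤ (X t - X σ) - (X' t - X' σ) := by linarith
    _ = (∫ s in σ..t, b (X s)) - (∫ s in σ..t, b (X' s)) - (K' t - K' σ) := by
      rw [hS.sub_eq_integral_add hb.continuous hσT ht, hS'.sub_eq_integral_add hb.continuous hσT ht,
        hKσ]
      ring
    _ ≤ ∫ s in σ..t, (b (X s) - b (X' s)) := by
      rw [intervalIntegral.integral_sub (hintegrable hbX) (hintegrable hbX')]
      linarith [K'.mono hσ.2]
    _ ≤ ∫ s in σ..t, (Lb : ℝ) * |X s - X' s| :=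
      intervalIntegral.integral_mono_on hσ.2 ((hintegrable hbX).sub (hintegrable hbX'))
        ((hintegrable hu).const_mul _)
        fun s _ => by simpa [Real.dist_eq] using (le_abs_self _).trans (hb.dist_le_mul (X s) (X' s))
    _ ≤ ∫ s in (0:ℝ)..t, (Lb : ℝ) * |X s - X' s| :=
      intervalIntegral.integral_mono_interval hσ.1 hσ.2 le_rfl
        (Filter.Eventually.of_forall fun s => by positivity)
        (((hu.mono hsub).intervalIntegrable_of_Icc ht.1).const_mul _)
    _ = Lb * ∫ s in (0:ℝ)..t, |X s - X' s| := intervalIntegral.integral_const_mul _ _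

theorem eqOn (hS : IsReflectedSolution T ξ b h X K) (hS' : IsReflectedSolution T ξ b h X' K')
    {Lb : NNReal} (hb : LipschitzWith Lb b) (hh : Continuous h) (hsm : StrictMono h) :
    EqOn X X' (Icc 0 T) := by
  have hzero := eqOn_zero_of_le_mul_integral (u := fun s => |X s - X' s|)
    (hS.continuousOn.sub hS'.continuousOn).abs (fun _ _ => abs_nonneg _) fun t ht =>
      abs_sub_le_iff.2 ⟨hS.sub_le_mul_integral_abs_sub hS' hb hh hsm ht, by
        simpa only [abs_sub_comm] using hS'.sub_le_mul_integral_abs_sub hS hb hh hsm ht⟩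
  exact fun t ht => sub_eq_zero.1 (abs_eq_zero.1 (hzero t ht))

theorem apply_eq_of_eqOn (hS : IsReflectedSolution T ξ b h X K)
    (hS' : IsReflectedSolution T ξ b h X' K') (hX : EqOn X X' (Icc 0 T)) (ht : t ∈ Icc 0 T) :
    K t = K' t := by
  have hdrift : ∫ s in (0:ℝ)..t, b (X s) = ∫ s in (0:ℝ)..t, b (X' s) :=
    intervalIntegral.integral_congr fun s hs => by
      rw [hX (uIcc_subset_Icc (left_mem_Icc.2 (ht.1.trans ht.2)) ht hs)]
  linarith [hS.eq_integral t ht, hS'.eq_integral t ht, hX ht]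

end IsReflectedSolution

theorem stmt8_general
    (T : ℝ) (ξ : ℝ)
    (b : ℝ → ℝ) (Lb : NNReal) (hb : LipschitzWith Lb b)
    (m M : ℝ) (hm : 0 < m)
    (h : ℝ → ℝ) (hmono : Monotone h)
    (hbil : ∀ x y : ℝ, m * |x - y| ≤ |h x - h y| ∧ |h x - h y| ≤ M * |x - y|)
    (X X' : ℝ → ℝ) (K K' : StieltjesFunction ℝ)
    (hXc : ContinuousOn X (Icc 0 T)) (hK0 : K 0 = 0)
    (hXeq : ∀ t ∈ Icc (0:ℝ) T, X t = ξ + (∫ s in (0:ℝ)..t, b (X s)) + K t)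
    (hXpos : ∀ t ∈ Icc (0:ℝ) T, 0 ≤ h (X t))
    (hXflat : ∀ t ∈ Icc (0:ℝ) T, ∫ s in Ioc (0:ℝ) t, h (X s) ∂K.measure = 0)
    (hX'c : ContinuousOn X' (Icc 0 T)) (hK'0 : K' 0 = 0)
    (hX'eq : ∀ t ∈ Icc (0:ℝ) T, X' t = ξ + (∫ s in (0:ℝ)..t, b (X' s)) + K' t)
    (hX'pos : ∀ t ∈ Icc (0:ℝ) T, 0 ≤ h (X' t))
    (hX'flat : ∀ t ∈ Icc (0:ℝ) T, ∫ s in Ioc (0:ℝ) t, h (X' s) ∂K'.measure = 0) :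
    ∀ t ∈ Icc (0:ℝ) T, X t = X' t ∧ K t = K' t := by
  have hh : Continuous h := (LipschitzWith.of_dist_le' fun x y => by
    simpa only [Real.dist_eq] using (hbil x y).2).continuous
  have hsm : StrictMono h := hmono.strictMono_of_injective fun x y hxy => by
    have hle := (hbil x y).1
    rw [hxy, sub_self, abs_zero] at hle
    exact sub_eq_zero.1 (abs_nonpos_iff.1 (nonpos_of_mul_nonpos_right hle hm))
  have hS : IsReflectedSolution T ξ b h X K := ⟨hXc, hK0, hXeq, hXpos, hXflat⟩
  have hS' : IsReflectedSolution T ξ b h X' K' := ⟨hX'c, hK'0, hX'eq, hX'pos, hX'flat⟩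
  have hX := hS.eqOn hS' hb hh hsm
  exact fun t ht => ⟨hX ht, hS.apply_eq_of_eqOn hS' hX ht⟩

theorem stmt8
    (T : ℝ) (hT : 0 < T) (ξ : ℝ)
    (b : ℝ → ℝ) (Lb : NNReal) (hb : LipschitzWith Lb b)
    (m M : ℝ) (hm : 0 < m) (hmM : m ≤ M)
    (h : ℝ → ℝ) (hmono : Monotone h)
    (hbil : ∀ x y : ℝ, m * |x - y| ≤ |h x - h y| ∧ |h x - h y| ≤ M * |x - y|)
    (hξ : 0 ≤ h ξ)
    (X X' : ℝ → ℝ) (K K' : StieltjesFunction ℝ)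
    (hXc : ContinuousOn X (Icc 0 T)) (hKc : Continuous ⇑K) (hK0 : K 0 = 0)
    (hXeq : ∀ t ∈ Icc (0:ℝ) T, X t = ξ + (∫ s in (0:ℝ)..t, b (X s)) + K t)
    (hXpos : ∀ t ∈ Icc (0:ℝ) T, 0 ≤ h (X t))
    (hXflat : ∀ t ∈ Icc (0:ℝ) T, ∫ s in Ioc (0:ℝ) t, h (X s) ∂K.measure = 0)
    (hX'c : ContinuousOn X' (Icc 0 T)) (hK'c : Continuous ⇑K') (hK'0 : K' 0 = 0)
    (hX'eq : ∀ t ∈ Icc (0:ℝ) T, X' t = ξ + (∫ s in (0:ℝ)..t, b (X' s)) + K' t)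
    (hX'pos : ∀ t ∈ Icc (0:ℝ) T, 0 ≤ h (X' t))
    (hX'flat : ∀ t ∈ Icc (0:ℝ) T, ∫ s in Ioc (0:ℝ) t, h (X' s) ∂K'.measure = 0) :
    ∀ t ∈ Icc (0:ℝ) T, X t = X' t ∧ K t = K' t :=
  stmt8_general T ξ b Lb hb m M hm h hmono hbil X X' K K' hXc hK0 hXeq hXpos hXflat hX'c hK'0 hX'eq
    hX'pos hX'flat
end

section
/- Let b, σ : ℝ → ℝ be Lipschitz, K⁰ continuous nondecreasing with K⁰(0)=0, N > 0, and let Y^φ, Y^ψ solve the skeleton equation with controls φ, ψ in the L² ball of radius N. Then there exists a constant C (depending on T, N, ξ, the Lipschitz constants, K⁰(T)) such that sup_{t∈[0,T]} |Y^φ(t) − Y^ψ(t)|² ≤ C ∫₀ᵀ |φ(s) − ψ(s)|² ds. -/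
/-!
Both the a priori bound and the stability estimate come from one Gronwall argument: if
`|w t| ≤ α ∫₀ᵗ |w| + β ∫₀ᵗ |w| |χ| + γ ∫₀ᵗ |ζ| + a` with `∫₀ᵀ χ² ≤ N`, then squaring and
Cauchy–Schwarz give `w t² ≤ 4 (a² + γ² T ∫₀ᵀ ζ²) + (4α²T + 4β²N) ∫₀ᵗ w²`, and Gronwall bounds `w²`.
A solution `Y` with control `φ` has this form (`ζ = φ`) by `|b y| ≤ |b 0| + L_b |y|`,
`|σ y| ≤ |σ 0| + L_σ |y|` and `0 ≤ K⁰ ≤ K⁰(T)`, uniformly over the ball `∫₀ᵀ φ² ≤ N`.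
For the difference `Y - Z` of two solutions, `σ(Y) φ - σ(Z) ψ = (σ(Y) - σ(Z)) φ + σ(Z) (φ - ψ)`
and that uniform bound on `Z` give the form with `a = 0` and `ζ = φ - ψ`.
-/

open MeasureTheory Set

open Real

theorem add_mul_gronwallBound_zero (A c x : ℝ) :
    A + c * gronwallBound 0 c A x = A * exp (c * x) := by
  rcases eq_or_ne c 0 with rfl | hc
  · simp
  · rw [gronwallBound_of_K_ne_0 hc]
    field_simp
    ring

theorem le_mul_exp_of_le_add_mul_integral_s12 {u : ℝ → ℝ} {a b A c : ℝ} (hc : 0 ≤ c)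
    (hu : ContinuousOn u (Icc a b)) (h : ∀ t ∈ Icc a b, u t ≤ A + c * ∫ s in a..t, u s) :
    ∀ t ∈ Icc a b, u t ≤ A * exp (c * (t - a)) := by
  set v : ℝ → ℝ := fun x => ∫ s in a..x, u s
  have hv : ∀ x ∈ Icc a b, HasDerivWithinAt v (u x) (Icc a b) x := fun x hx => by
    have : Fact (x ∈ Icc a b) := ⟨hx⟩
    exact intervalIntegral.integral_hasDerivWithinAt_right
      (hu.mono (uIcc_subset_Icc (left_mem_Icc.2 (hx.1.trans hx.2)) hx)).intervalIntegrable
      (hu.stronglyMeasurableAtFilter_nhdsWithin measurableSet_Icc x) (hu x hx)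
  have hvb := le_gronwallBound_of_liminf_deriv_right_le (f := v) (f' := u) (δ := 0) (K := c)
    (ε := A) (fun x hx => (hv x hx).continuousWithinAt)
    (fun x hx _ hr => ((hv x (Ico_subset_Icc_self hx)).mono_of_mem_nhdsWithin
      (Icc_mem_nhdsGE_of_mem hx)).liminf_right_slope_le hr)
    (by simp [v]) (fun x hx => by linarith [h x (Ico_subset_Icc_self hx)])
  intro t ht
  calc u t ≤ A + c * v t := h t ht
    _ ≤ A + c * gronwallBound 0 c A (t - a) := by gcongr; exact hvb t ht
    _ = A * exp (c * (t - a)) := add_mul_gronwallBound_zero A c (t - a)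

theorem sq_integral_abs_mul_le {α : Type*} [MeasurableSpace α] {μ : Measure α} {f g : α → ℝ}
    (hf : MemLp f 2 μ) (hg : MemLp g 2 μ) :
    (∫ x, |f x| * |g x| ∂μ) ^ 2 ≤ (∫ x, f x ^ 2 ∂μ) * ∫ x, g x ^ 2 ∂μ := by
  have holder := integral_mul_norm_le_Lp_mul_Lq (μ := μ) Real.HolderConjugate.two_two
    (by simpa using hf) (by simpa using hg)
  simp only [Real.norm_eq_abs, Real.rpow_two, sq_abs, ← Real.sqrt_eq_rpow] at holder
  calc (∫ x, |f x| * |g x| ∂μ) ^ 2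
      ≤ (√(∫ x, f x ^ 2 ∂μ) * √(∫ x, g x ^ 2 ∂μ)) ^ 2 := by gcongr
    _ = (∫ x, f x ^ 2 ∂μ) * ∫ x, g x ^ 2 ∂μ := by
        rw [mul_pow, sq_sqrt (integral_nonneg fun x => sq_nonneg _),
          sq_sqrt (integral_nonneg fun x => sq_nonneg _)]

theorem sq_intervalIntegral_abs_mul_le {f g : ℝ → ℝ} {a b : ℝ} (hab : a ≤ b)
    (hf : MemLp f 2 (volume.restrict (Ioc a b))) (hg : MemLp g 2 (volume.restrict (Ioc a b))) :
    (∫ x in a..b, |f x| * |g x|) ^ 2 ≤ (∫ x in a..b, f x ^ 2) * ∫ x in a..b, g x ^ 2 := by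
  simp only [intervalIntegral.integral_of_le hab]
  exact sq_integral_abs_mul_le hf hg

theorem sq_intervalIntegral_abs_le {f : ℝ → ℝ} {a b : ℝ} (hab : a ≤ b)
    (hf : MemLp f 2 (volume.restrict (Ioc a b))) :
    (∫ x in a..b, |f x|) ^ 2 ≤ (b - a) * ∫ x in a..b, f x ^ 2 := by
  simpa [mul_comm] using sq_intervalIntegral_abs_mul_le hab hf (memLp_const 1)

theorem ContinuousOn.memLp_restrict_Icc {E : Type*} [NormedAddCommGroup E] {f : ℝ → E}
    {a b : ℝ} {p : ENNReal} (hf : ContinuousOn f (Icc a b)) :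
    MemLp f p (volume.restrict (Icc a b)) := by
  obtain ⟨C, hC⟩ := isCompact_Icc.exists_bound_of_continuousOn hf
  exact MemLp.of_bound (hf.aestronglyMeasurable measurableSet_Icc) C
    (ae_restrict_of_forall_mem measurableSet_Icc hC)

theorem IntegrableOn.intervalIntegrable_of_mem_Icc {E : Type*} [NormedAddCommGroup E]
    {f : ℝ → E} {a b t : ℝ}
    (hf : IntegrableOn f (Icc a b)) (ht : t ∈ Icc a b) : IntervalIntegrable f volume a t :=
  (hf.mono_set (uIcc_subset_Icc (left_mem_Icc.2 (ht.1.trans ht.2)) ht)).intervalIntegrable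

theorem MemLp.restrict_Ioc_of_mem_Icc {E : Type*} [NormedAddCommGroup E] {f : ℝ → E}
    {a b t : ℝ} {p : ENNReal} (hf : MemLp f p (volume.restrict (Icc a b))) (ht : t ∈ Icc a b) :
    MemLp f p (volume.restrict (Ioc a t)) :=
  hf.mono_measure (Measure.restrict_mono (Ioc_subset_Icc_self.trans (Icc_subset_Icc_right ht.2))
    le_rfl)

theorem intervalIntegral_sq_le_of_mem_Icc {f : ℝ → ℝ} {a b t : ℝ}
    (hf : MemLp f 2 (volume.restrict (Icc a b))) (ht : t ∈ Icc a b) :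
    ∫ x in a..t, f x ^ 2 ≤ ∫ x in a..b, f x ^ 2 :=
  intervalIntegral.integral_mono_interval le_rfl ht.1 ht.2
    (Filter.Eventually.of_forall fun _ => sq_nonneg _)
    (IntegrableOn.intervalIntegrable_of_mem_Icc hf.integrable_sq
      (right_mem_Icc.2 (ht.1.trans ht.2)))

theorem LipschitzWith.abs_le_abs_zero_add {f : ℝ → ℝ} {L : NNReal} (hf : LipschitzWith L f)
    (x : ℝ) : |f x| ≤ |f 0| + L * |x| := by
  have := hf.dist_le_mul x 0
  rw [Real.dist_eq, Real.dist_eq, sub_zero] at this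
  linarith [abs_sub_abs_le_abs_sub (f x) (f 0)]

theorem sq_le_add_mul_integral_sq_of_abs_le {w χ ζ : ℝ → ℝ} {T N a α β γ : ℝ}
    (hw : ContinuousOn w (Icc 0 T)) (hχ : MemLp χ 2 (volume.restrict (Icc 0 T)))
    (hχN : ∫ s in (0:ℝ)..T, χ s ^ 2 ≤ N) (hζ : MemLp ζ 2 (volume.restrict (Icc 0 T)))
    (h : ∀ t ∈ Icc 0 T, |w t| ≤ α * (∫ s in (0:ℝ)..t, |w s|)
      + β * (∫ s in (0:ℝ)..t, |w s| * |χ s|) + γ * (∫ s in (0:ℝ)..t, |ζ s|) + a) :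
    ∀ t ∈ Icc 0 T, w t ^ 2 ≤ 4 * (a ^ 2 + γ ^ 2 * T * ∫ s in (0:ℝ)..T, ζ s ^ 2)
      + (4 * α ^ 2 * T + 4 * β ^ 2 * N) * ∫ s in (0:ℝ)..t, w s ^ 2 := by
  intro t ht
  have hwL2 : MemLp w 2 (volume.restrict (Ioc 0 t)) :=
    MemLp.restrict_Ioc_of_mem_Icc hw.memLp_restrict_Icc ht
  set X := ∫ s in (0:ℝ)..t, |w s|
  set P := ∫ s in (0:ℝ)..t, |w s| * |χ s|
  set G := ∫ s in (0:ℝ)..t, |ζ s|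
  set W := ∫ s in (0:ℝ)..t, w s ^ 2
  have hW : 0 ≤ W := intervalIntegral.integral_nonneg ht.1 fun s _ => sq_nonneg _
  have hX : X ^ 2 ≤ T * W := by
    refine (sq_intervalIntegral_abs_le ht.1 hwL2).trans ?_
    rw [sub_zero]
    gcongr
    exact ht.2
  have hP : P ^ 2 ≤ N * W := by
    refine (sq_intervalIntegral_abs_mul_le ht.1 hwL2 (MemLp.restrict_Ioc_of_mem_Icc hχ ht)).trans ?_
    rw [mul_comm N]
    gcongr
    exact (intervalIntegral_sq_le_of_mem_Icc hχ ht).trans hχN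
  have hG : G ^ 2 ≤ T * ∫ s in (0:ℝ)..T, ζ s ^ 2 := by
    refine (sq_intervalIntegral_abs_le ht.1 (MemLp.restrict_Ioc_of_mem_Icc hζ ht)).trans ?_
    rw [sub_zero]
    exact mul_le_mul ht.2 (intervalIntegral_sq_le_of_mem_Icc hζ ht)
      (intervalIntegral.integral_nonneg ht.1 fun s _ => sq_nonneg _) (ht.1.trans ht.2)
  have hsum : ∀ x y z v : ℝ, (x + y + z + v) ^ 2 ≤ 4 * (x ^ 2 + y ^ 2 + z ^ 2 + v ^ 2) :=
    fun x y z v => by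
      nlinarith [sq_nonneg (x - y), sq_nonneg (x - z), sq_nonneg (x - v), sq_nonneg (y - z),
        sq_nonneg (y - v), sq_nonneg (z - v)]
  calc w t ^ 2 = |w t| ^ 2 := (sq_abs _).symm
    _ ≤ (α * X + β * P + γ * G + a) ^ 2 := by gcongr; exact h t ht
    _ ≤ 4 * (α ^ 2 * X ^ 2 + β ^ 2 * P ^ 2 + γ ^ 2 * G ^ 2 + a ^ 2) := by
        simpa only [mul_pow] using hsum (α * X) (β * P) (γ * G) a
    _ ≤ 4 * (α ^ 2 * (T * W) + β ^ 2 * (N * W) + γ ^ 2 * (T * ∫ s in (0:ℝ)..T, ζ s ^ 2)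
          + a ^ 2) := by gcongr
    _ = _ := by ring

theorem sq_le_mul_exp_of_abs_le_integral {w χ ζ : ℝ → ℝ} {T N a α β γ : ℝ}
    (hw : ContinuousOn w (Icc 0 T)) (hχ : MemLp χ 2 (volume.restrict (Icc 0 T)))
    (hχN : ∫ s in (0:ℝ)..T, χ s ^ 2 ≤ N) (hζ : MemLp ζ 2 (volume.restrict (Icc 0 T)))
    (h : ∀ t ∈ Icc 0 T, |w t| ≤ α * (∫ s in (0:ℝ)..t, |w s|)
      + β * (∫ s in (0:ℝ)..t, |w s| * |χ s|) + γ * (∫ s in (0:ℝ)..t, |ζ s|) + a) :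
    ∀ t ∈ Icc 0 T, w t ^ 2 ≤ 4 * (a ^ 2 + γ ^ 2 * T * ∫ s in (0:ℝ)..T, ζ s ^ 2)
      * exp ((4 * α ^ 2 * T + 4 * β ^ 2 * N) * T) := by
  intro t ht
  have hT : 0 ≤ T := ht.1.trans ht.2
  have hN : 0 ≤ N := (intervalIntegral.integral_nonneg hT fun s _ => sq_nonneg _).trans hχN
  have hζ2 : 0 ≤ ∫ s in (0:ℝ)..T, ζ s ^ 2 :=
    intervalIntegral.integral_nonneg hT fun s _ => sq_nonneg _
  calc w t ^ 2 ≤ 4 * (a ^ 2 + γ ^ 2 * T * ∫ s in (0:ℝ)..T, ζ s ^ 2)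
        * exp ((4 * α ^ 2 * T + 4 * β ^ 2 * N) * (t - 0)) :=
      le_mul_exp_of_le_add_mul_integral_s12 (by positivity) (hw.pow 2)
        (sq_le_add_mul_integral_sq_of_abs_le hw hχ hχN hζ h) t ht
    _ ≤ _ := by gcongr; linarith [ht.2]

theorem abs_intervalIntegral_le_of_abs_le {f g : ℝ → ℝ} {a b : ℝ} (hab : a ≤ b)
    (h : ∀ s ∈ Ioc a b, |f s| ≤ g s) (hg : IntervalIntegrable g volume a b) :
    |∫ s in a..b, f s| ≤ ∫ s in a..b, g s := by
  simpa only [Real.norm_eq_abs] using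
    intervalIntegral.norm_integral_le_of_norm_le hab
      (ae_of_all _ fun s hs => (Real.norm_eq_abs _).trans_le (h s hs)) hg

def IsSkeletonSolution (T ξ : ℝ) (b σ K₀ φ Y : ℝ → ℝ) : Prop :=
  ContinuousOn Y (Icc 0 T) ∧ ∀ t ∈ Icc (0:ℝ) T,
    Y t = ξ + (∫ s in (0:ℝ)..t, b (Y s)) + (∫ s in (0:ℝ)..t, σ (Y s) * φ s) + K₀ t

namespace IsSkeletonSolution

variable {T ξ : ℝ} {b σ K₀ φ ψ Y Z : ℝ → ℝ} {Lb Lσ : NNReal}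

theorem abs_le (hb : LipschitzWith Lb b) (hσ : LipschitzWith Lσ σ)
    (hK₀m : MonotoneOn K₀ (Icc 0 T)) (hK₀0 : K₀ 0 = 0)
    (hφ : MemLp φ 2 (volume.restrict (Icc 0 T))) (hY : IsSkeletonSolution T ξ b σ K₀ φ Y) :
    ∀ t ∈ Icc 0 T, |Y t| ≤ Lb * (∫ s in (0:ℝ)..t, |Y s|) + Lσ * (∫ s in (0:ℝ)..t, |Y s| * |φ s|)
      + |σ 0| * (∫ s in (0:ℝ)..t, |φ s|) + (|ξ| + K₀ T + T * |b 0|) := by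
  intro t ht
  have hφi : IntegrableOn φ (Icc 0 T) := hφ.integrable one_le_two
  have hYi : IntervalIntegrable (fun s => |Y s|) volume 0 t :=
    IntegrableOn.intervalIntegrable_of_mem_Icc hY.1.abs.integrableOn_Icc ht
  have hφi' : IntervalIntegrable (fun s => |φ s|) volume 0 t :=
    IntegrableOn.intervalIntegrable_of_mem_Icc hφi.abs ht
  have hYφi : IntervalIntegrable (fun s => |Y s| * |φ s|) volume 0 t :=
    IntegrableOn.intervalIntegrable_of_mem_Icc
      (IntegrableOn.continuousOn_mul hY.1.abs hφi.abs isCompact_Icc) ht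
  have hK₀ : |K₀ t| ≤ K₀ T := by
    have h0 : (0:ℝ) ∈ Icc 0 T := left_mem_Icc.2 (ht.1.trans ht.2)
    rw [abs_of_nonneg (hK₀0 ▸ hK₀m h0 ht ht.1)]
    exact hK₀m ht (right_mem_Icc.2 (ht.1.trans ht.2)) ht.2
  have hdrift : |∫ s in (0:ℝ)..t, b (Y s)| ≤ t * |b 0| + Lb * ∫ s in (0:ℝ)..t, |Y s| := by
    calc _ ≤ ∫ s in (0:ℝ)..t, (|b 0| + Lb * |Y s|) :=
          abs_intervalIntegral_le_of_abs_le ht.1 (fun s _ => hb.abs_le_abs_zero_add _)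
            (intervalIntegrable_const.add (hYi.const_mul _))
      _ = _ := by
          rw [intervalIntegral.integral_add intervalIntegrable_const (hYi.const_mul _),
            intervalIntegral.integral_const, intervalIntegral.integral_const_mul, sub_zero,
            smul_eq_mul]
  have hcontrol : |∫ s in (0:ℝ)..t, σ (Y s) * φ s|
      ≤ |σ 0| * (∫ s in (0:ℝ)..t, |φ s|) + Lσ * ∫ s in (0:ℝ)..t, |Y s| * |φ s| := by
    calc _ ≤ ∫ s in (0:ℝ)..t, (|σ 0| * |φ s| + Lσ * (|Y s| * |φ s|)) := by
          refine abs_intervalIntegral_le_of_abs_le ht.1 (fun s _ => ?_)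
            ((hφi'.const_mul _).add (hYφi.const_mul _))
          calc |σ (Y s) * φ s| ≤ (|σ 0| + Lσ * |Y s|) * |φ s| := by
                rw [abs_mul]; gcongr; exact hσ.abs_le_abs_zero_add _
            _ = _ := by ring
      _ = _ := by
          rw [intervalIntegral.integral_add (hφi'.const_mul _) (hYφi.const_mul _),
            intervalIntegral.integral_const_mul, intervalIntegral.integral_const_mul]
  have htb : t * |b 0| ≤ T * |b 0| := by gcongr; exact ht.2
  rw [hY.2 t ht]
  linarith [abs_add_le ξ (∫ s in (0:ℝ)..t, b (Y s)),
    abs_add_le (ξ + ∫ s in (0:ℝ)..t, b (Y s)) (∫ s in (0:ℝ)..t, σ (Y s) * φ s),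
    abs_add_le (ξ + (∫ s in (0:ℝ)..t, b (Y s)) + ∫ s in (0:ℝ)..t, σ (Y s) * φ s) (K₀ t)]

theorem abs_sub_le (hb : LipschitzWith Lb b) (hσ : LipschitzWith Lσ σ)
    (hφ : MemLp φ 2 (volume.restrict (Icc 0 T))) (hψ : MemLp ψ 2 (volume.restrict (Icc 0 T)))
    (hY : IsSkeletonSolution T ξ b σ K₀ φ Y) (hZ : IsSkeletonSolution T ξ b σ K₀ ψ Z) {M : ℝ}
    (hM : ∀ s ∈ Icc 0 T, |σ (Z s)| ≤ M) :
    ∀ t ∈ Icc 0 T, |Y t - Z t| ≤ Lb * (∫ s in (0:ℝ)..t, |Y s - Z s|)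
      + Lσ * (∫ s in (0:ℝ)..t, |Y s - Z s| * |φ s|) + M * ∫ s in (0:ℝ)..t, |φ s - ψ s| := by
  intro t ht
  have hφi : IntegrableOn φ (Icc 0 T) := hφ.integrable one_le_two
  have hψi : IntegrableOn ψ (Icc 0 T) := hψ.integrable one_le_two
  have hbY : IntervalIntegrable (fun s => b (Y s)) volume 0 t :=
    IntegrableOn.intervalIntegrable_of_mem_Icc
      (hb.continuous.comp_continuousOn hY.1).integrableOn_Icc ht
  have hbZ : IntervalIntegrable (fun s => b (Z s)) volume 0 t :=
    IntegrableOn.intervalIntegrable_of_mem_Icc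
      (hb.continuous.comp_continuousOn hZ.1).integrableOn_Icc ht
  have hσYφ : IntervalIntegrable (fun s => σ (Y s) * φ s) volume 0 t :=
    IntegrableOn.intervalIntegrable_of_mem_Icc (IntegrableOn.continuousOn_mul
      (hσ.continuous.comp_continuousOn hY.1) hφi isCompact_Icc) ht
  have hσZψ : IntervalIntegrable (fun s => σ (Z s) * ψ s) volume 0 t :=
    IntegrableOn.intervalIntegrable_of_mem_Icc (IntegrableOn.continuousOn_mul
      (hσ.continuous.comp_continuousOn hZ.1) hψi isCompact_Icc) ht
  have hD : IntervalIntegrable (fun s => |Y s - Z s|) volume 0 t :=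
    IntegrableOn.intervalIntegrable_of_mem_Icc (hY.1.sub hZ.1).abs.integrableOn_Icc ht
  have hDφ : IntervalIntegrable (fun s => |Y s - Z s| * |φ s|) volume 0 t :=
    IntegrableOn.intervalIntegrable_of_mem_Icc
      (IntegrableOn.continuousOn_mul (hY.1.sub hZ.1).abs hφi.abs isCompact_Icc) ht
  have hφψ : IntervalIntegrable (fun s => |φ s - ψ s|) volume 0 t :=
    IntegrableOn.intervalIntegrable_of_mem_Icc (hφi.sub hψi).abs ht
  have hdiff : Y t - Z t = (∫ s in (0:ℝ)..t, (b (Y s) - b (Z s)))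
      + ∫ s in (0:ℝ)..t, (σ (Y s) * φ s - σ (Z s) * ψ s) := by
    rw [intervalIntegral.integral_sub hbY hbZ, intervalIntegral.integral_sub hσYφ hσZψ,
      hY.2 t ht, hZ.2 t ht]
    ring
  have hdrift : |∫ s in (0:ℝ)..t, (b (Y s) - b (Z s))| ≤ Lb * ∫ s in (0:ℝ)..t, |Y s - Z s| := by
    rw [← intervalIntegral.integral_const_mul]
    refine abs_intervalIntegral_le_of_abs_le ht.1 (fun s _ => ?_) (hD.const_mul _)
    simpa only [Real.dist_eq] using hb.dist_le_mul (Y s) (Z s)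
  have hcontrol : |∫ s in (0:ℝ)..t, (σ (Y s) * φ s - σ (Z s) * ψ s)|
      ≤ Lσ * (∫ s in (0:ℝ)..t, |Y s - Z s| * |φ s|) + M * ∫ s in (0:ℝ)..t, |φ s - ψ s| := by
    rw [← intervalIntegral.integral_const_mul, ← intervalIntegral.integral_const_mul,
      ← intervalIntegral.integral_add (hDφ.const_mul _) (hφψ.const_mul _)]
    refine abs_intervalIntegral_le_of_abs_le ht.1 (fun s hs => ?_)
      ((hDφ.const_mul _).add (hφψ.const_mul _))
    have hσ_lip : |σ (Y s) - σ (Z s)| ≤ Lσ * |Y s - Z s| := by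
      simpa only [Real.dist_eq] using hσ.dist_le_mul (Y s) (Z s)
    have hσ_bdd : |σ (Z s)| ≤ M := hM s ⟨hs.1.le, hs.2.trans ht.2⟩
    calc |σ (Y s) * φ s - σ (Z s) * ψ s|
        = |(σ (Y s) - σ (Z s)) * φ s + σ (Z s) * (φ s - ψ s)| := by ring_nf
      _ ≤ |σ (Y s) - σ (Z s)| * |φ s| + |σ (Z s)| * |φ s - ψ s| := by
          rw [← abs_mul, ← abs_mul]; exact abs_add_le _ _
      _ ≤ Lσ * |Y s - Z s| * |φ s| + M * |φ s - ψ s| := by gcongr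
      _ = _ := by ring
  rw [hdiff]
  linarith [abs_add_le (∫ s in (0:ℝ)..t, (b (Y s) - b (Z s)))
    (∫ s in (0:ℝ)..t, (σ (Y s) * φ s - σ (Z s) * ψ s))]

end IsSkeletonSolution

theorem exists_abs_le_of_isSkeletonSolution {T ξ N : ℝ} {b σ K₀ : ℝ → ℝ} {Lb Lσ : NNReal}
    (hb : LipschitzWith Lb b) (hσ : LipschitzWith Lσ σ)
    (hK₀m : MonotoneOn K₀ (Icc 0 T)) (hK₀0 : K₀ 0 = 0) :
    ∃ R : ℝ, ∀ φ : ℝ → ℝ, MemLp φ 2 (volume.restrict (Icc 0 T)) →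
      ∫ s in (0:ℝ)..T, φ s ^ 2 ≤ N → ∀ Y : ℝ → ℝ, IsSkeletonSolution T ξ b σ K₀ φ Y →
        ∀ t ∈ Icc 0 T, |Y t| ≤ R := by
  refine ⟨√(4 * ((|ξ| + K₀ T + T * |b 0|) ^ 2 + |σ 0| ^ 2 * T * N)
    * exp ((4 * Lb ^ 2 * T + 4 * Lσ ^ 2 * N) * T)), fun φ hφ hφN Y hY t ht => ?_⟩
  have hT : 0 ≤ T := ht.1.trans ht.2
  refine abs_le_sqrt ((sq_le_mul_exp_of_abs_le_integral hY.1 hφ hφN hφ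
    (hY.abs_le hb hσ hK₀m hK₀0 hφ) t ht).trans ?_)
  gcongr

theorem stmt12_general
    (T : ℝ) (ξ : ℝ) (N : ℝ)
    (b σ : ℝ → ℝ) (Lb Lσ : NNReal)
    (hb : LipschitzWith Lb b) (hσ : LipschitzWith Lσ σ)
    (K₀ : ℝ → ℝ)
    (hK₀m : MonotoneOn K₀ (Icc 0 T)) (hK₀0 : K₀ 0 = 0) :
    ∃ C : ℝ, ∀ φ ψ : ℝ → ℝ,
      MemLp φ 2 (volume.restrict (Icc (0:ℝ) T)) →
      MemLp ψ 2 (volume.restrict (Icc (0:ℝ) T)) →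
      (∫ s in (0:ℝ)..T, (φ s) ^ 2) ≤ N →
      (∫ s in (0:ℝ)..T, (ψ s) ^ 2) ≤ N →
      ∀ Y Z : ℝ → ℝ,
        ContinuousOn Y (Icc 0 T) →
        (∀ t ∈ Icc (0:ℝ) T,
          Y t = ξ + (∫ s in (0:ℝ)..t, b (Y s)) + (∫ s in (0:ℝ)..t, σ (Y s) * φ s) + K₀ t) →
        ContinuousOn Z (Icc 0 T) →
        (∀ t ∈ Icc (0:ℝ) T,
          Z t = ξ + (∫ s in (0:ℝ)..t, b (Z s)) + (∫ s in (0:ℝ)..t, σ (Z s) * ψ s) + K₀ t) →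
        ∀ t ∈ Icc (0:ℝ) T,
          |Y t - Z t| ^ 2 ≤ C * ∫ s in (0:ℝ)..T, |φ s - ψ s| ^ 2 := by
  obtain ⟨R, hR⟩ := exists_abs_le_of_isSkeletonSolution (ξ := ξ) (N := N) hb hσ hK₀m hK₀0
  refine ⟨4 * ((|σ 0| + Lσ * R) ^ 2 * T) * exp ((4 * Lb ^ 2 * T + 4 * Lσ ^ 2 * N) * T),
    fun φ ψ hφ hψ hφN hψN Y Z hYc hYeq hZc hZeq t ht => ?_⟩
  have hZ : IsSkeletonSolution T ξ b σ K₀ ψ Z := ⟨hZc, hZeq⟩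
  have hM : ∀ s ∈ Icc 0 T, |σ (Z s)| ≤ |σ 0| + Lσ * R := fun s hs =>
    (hσ.abs_le_abs_zero_add _).trans (by gcongr; exact hR ψ hψ hψN Z hZ s hs)
  have hdiff := IsSkeletonSolution.abs_sub_le hb hσ hφ hψ ⟨hYc, hYeq⟩ hZ hM
  have key := sq_le_mul_exp_of_abs_le_integral (w := fun s => Y s - Z s)
    (ζ := fun s => φ s - ψ s) (a := 0) (hYc.sub hZc) hφ hφN (hφ.sub hψ)
    (fun t ht => (hdiff t ht).trans_eq (add_zero _).symm) t ht
  simp only [sq_abs]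
  calc (Y t - Z t) ^ 2 ≤ _ := key
    _ = _ := by ring

theorem stmt12
    (T : ℝ) (hT : 0 < T) (ξ : ℝ) (N : ℝ) (hN : 0 < N)
    (b σ : ℝ → ℝ) (Lb Lσ : NNReal)
    (hb : LipschitzWith Lb b) (hσ : LipschitzWith Lσ σ)
    (K₀ : ℝ → ℝ) (hK₀c : ContinuousOn K₀ (Icc 0 T))
    (hK₀m : MonotoneOn K₀ (Icc 0 T)) (hK₀0 : K₀ 0 = 0) :
    ∃ C : ℝ, ∀ φ ψ : ℝ → ℝ,
      MemLp φ 2 (volume.restrict (Icc (0:ℝ) T)) →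
      MemLp ψ 2 (volume.restrict (Icc (0:ℝ) T)) →
      (∫ s in (0:ℝ)..T, (φ s) ^ 2) ≤ N →
      (∫ s in (0:ℝ)..T, (ψ s) ^ 2) ≤ N →
      ∀ Y Z : ℝ → ℝ,
        ContinuousOn Y (Icc 0 T) →
        (∀ t ∈ Icc (0:ℝ) T,
          Y t = ξ + (∫ s in (0:ℝ)..t, b (Y s)) + (∫ s in (0:ℝ)..t, σ (Y s) * φ s) + K₀ t) →
        ContinuousOn Z (Icc 0 T) →
        (∀ t ∈ Icc (0:ℝ) T,
          Z t = ξ + (∫ s in (0:ℝ)..t, b (Z s)) + (∫ s in (0:ℝ)..t, σ (Z s) * ψ s) + K₀ t) →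
        ∀ t ∈ Icc (0:ℝ) T,
          |Y t - Z t| ^ 2 ≤ C * ∫ s in (0:ℝ)..T, |φ s - ψ s| ^ 2 :=
  stmt12_general T ξ N b σ Lb Lσ hb hσ K₀ hK₀m hK₀0
end

section
/- Let b, σ : ℝ → ℝ be Lipschitz, φₙ ⇀ φ weakly in L²([0,T],ℝ), and suppose Yⁿ → Z uniformly on [0,T] where Yⁿ solves Yⁿ(t) = ξ + ∫₀ᵗ b(Yⁿ) ds + ∫₀ᵗ σ(Yⁿ) φₙ ds + K⁰(t). Then Z solves Z(t) = ξ + ∫₀ᵗ b(Z) ds + ∫₀ᵗ σ(Z) φ ds + K⁰(t) for all t ∈ [0,T]. -/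
/-!
Uniform convergence `Yⁿ → Z` passes to the limit in `Yⁿ(t)` and, through the Lipschitz maps
`b` and `σ`, in the drift integral. The control term `∫₀ᵗ σ(Yⁿ) φₙ` is the `L²(0,T)` pairing
`⟪φₙ, 1_{[0,t]} σ(Yⁿ)⟫`: its right factor converges in norm, while the weakly convergent `φₙ`
are bounded by the uniform boundedness principle, so the pairing tends to `⟪φ, 1_{[0,t]} σ(Z)⟫`.
-/

open MeasureTheory Set Filter Topology
open scoped InnerProductSpace

section UniformConvergence

variable {ι α β : Type*} {l : Filter ι} {s : Set α}

theorem tendstoUniformlyOn_of_tendsto_sSup_abs_sub {F : ι → α → ℝ} {f : α → ℝ}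
    (hbdd : ∀ i, BddAbove ((fun x => |F i x - f x|) '' s))
    (h : Tendsto (fun i => sSup ((fun x => |F i x - f x|) '' s)) l (𝓝 0)) :
    TendstoUniformlyOn F f l s := by
  refine Metric.tendstoUniformlyOn_iff.2 fun ε hε => ?_
  filter_upwards [h.eventually (gt_mem_nhds hε)] with i hi x hx
  rw [Real.dist_eq, abs_sub_comm]
  exact (le_csSup (hbdd i) (mem_image_of_mem _ hx)).trans_lt hi

theorem TendstoUniformlyOn.indicator [Zero β] [UniformSpace β] {F : ι → α → β} {f : α → β}
    (h : TendstoUniformlyOn F f l s) (u : Set α) :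
    TendstoUniformlyOn (fun i => u.indicator (F i)) (u.indicator f) l s := fun U hU =>
  (h U hU).mono fun i hi x hx => by
    by_cases hxu : x ∈ u
    · simpa [hxu] using hi x hx
    · simpa [hxu] using refl_mem_uniformity hU

end UniformConvergence

section InnerProduct

variable {ι E : Type*} [NormedAddCommGroup E] [InnerProductSpace ℝ E]

theorem exists_norm_le_of_forall_abs_inner_le [CompleteSpace E] {x : ι → E}
    (h : ∀ z, ∃ C, ∀ i, |⟪x i, z⟫_ℝ| ≤ C) : ∃ C, ∀ i, ‖x i‖ ≤ C := by
  obtain ⟨C, hC⟩ := banach_steinhaus (g := fun i => innerSL ℝ (x i)) (by simpa using h)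
  exact ⟨C, fun i => by simpa [innerSL_apply_norm] using hC i⟩

theorem tendsto_inner_of_norm_le_of_tendsto {l : Filter ι} {x y : ι → E} {y₀ : E} {L C : ℝ}
    (hx : ∀ i, ‖x i‖ ≤ C) (hweak : Tendsto (fun i => ⟪x i, y₀⟫_ℝ) l (𝓝 L))
    (hy : Tendsto y l (𝓝 y₀)) : Tendsto (fun i => ⟪x i, y i⟫_ℝ) l (𝓝 L) := by
  have hdefect : Tendsto (fun i => ⟪x i, y i - y₀⟫_ℝ) l (𝓝 0) := by
    refine squeeze_zero_norm (fun i => ?_)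
      (by simpa using (tendsto_iff_norm_sub_tendsto_zero.1 hy).const_mul C)
    rw [Real.norm_eq_abs]
    exact (abs_real_inner_le_norm _ _).trans (mul_le_mul_of_nonneg_right (hx i) (norm_nonneg _))
  simpa [inner_sub_right] using hweak.add hdefect

end InnerProduct

section Lp

variable {ι α E : Type*} [MeasurableSpace α] {μ : Measure α} {s : Set α}
  [NormedAddCommGroup E] {p : ENNReal}

theorem MemLp.real_inner_toLp_toLp {f g : α → ℝ} (hf : MemLp f 2 μ) (hg : MemLp g 2 μ) :
    ⟪hf.toLp f, hg.toLp g⟫_ℝ = ∫ x, f x * g x ∂μ := by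
  rw [L2.inner_def]
  refine integral_congr_ae ?_
  filter_upwards [hf.coeFn_toLp, hg.coeFn_toLp] with x hfx hgx
  simp [hfx, hgx, mul_comm]

theorem ContinuousOn.memLp_restrict_of_isCompact [TopologicalSpace α] [OpensMeasurableSpace α]
    [IsFiniteMeasure (μ.restrict s)] {f : α → E} (hf : ContinuousOn f s) (hs : IsCompact s)
    (h's : MeasurableSet s) : MemLp f p (μ.restrict s) := by
  obtain ⟨C, hC⟩ := hs.exists_bound_of_continuousOn hf
  exact .of_bound (hf.aestronglyMeasurable_of_isCompact hs h's) C
    ((ae_restrict_mem h's).mono hC)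

theorem tendsto_toLp_of_tendstoUniformlyOn [Fact (1 ≤ p)] {l : Filter ι} (hs : MeasurableSet s)
    [IsFiniteMeasure (μ.restrict s)] {g : ι → α → E} {g₀ : α → E}
    (hg : ∀ i, MemLp (g i) p (μ.restrict s)) (hg₀ : MemLp g₀ p (μ.restrict s))
    (h : TendstoUniformlyOn g g₀ l s) :
    Tendsto (fun i => (hg i).toLp (g i)) l (𝓝 (hg₀.toLp g₀)) := by
  set C : ℝ := measureUnivNNReal (μ.restrict s) ^ p.toReal⁻¹
  have hC : 0 ≤ C := by positivity
  refine Metric.tendsto_nhds.2 fun ε hε => ?_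
  have hδ : 0 < ε / (C + 1) := by positivity
  filter_upwards [Metric.tendstoUniformlyOn_iff.1 h _ hδ] with i hi
  rw [dist_eq_norm, ← MemLp.toLp_sub]
  calc ‖((hg i).sub hg₀).toLp (g i - g₀)‖ ≤ C * (ε / (C + 1)) := by
        refine Lp.norm_le_of_ae_bound hδ.le ?_
        filter_upwards [((hg i).sub hg₀).coeFn_toLp, ae_restrict_mem hs] with x hx hxs
        rw [hx, Pi.sub_apply, ← dist_eq_norm, dist_comm]
        exact (hi x hxs).le
    _ < ε := by
        rw [mul_div_assoc', div_lt_iff₀ (by positivity)]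
        nlinarith

end Lp

theorem tendsto_intervalIntegral_mul_of_weak {a T t : ℝ} (ht : t ∈ Icc a T)
    {φn : ℕ → ℝ → ℝ} {φ : ℝ → ℝ} (hφn : ∀ n, MemLp (φn n) 2 (volume.restrict (Icc a T)))
    (hweak : ∀ g : ℝ → ℝ, MemLp g 2 (volume.restrict (Icc a T)) →
      Tendsto (fun n => ∫ s in a..T, φn n s * g s) atTop (𝓝 (∫ s in a..T, φ s * g s)))
    {u : ℕ → ℝ → ℝ} {u₀ : ℝ → ℝ} (hu : ∀ n, ContinuousOn (u n) (Icc a T))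
    (hu₀ : ContinuousOn u₀ (Icc a T)) (h : TendstoUniformlyOn u u₀ atTop (Icc a T)) :
    Tendsto (fun n => ∫ s in a..t, u n s * φn n s) atTop (𝓝 (∫ s in a..t, u₀ s * φ s)) := by
  have hT : a ≤ T := ht.1.trans ht.2
  have hint : ∀ f : ℝ → ℝ, ∫ s, f s ∂(volume.restrict (Icc a T)) = ∫ s in a..T, f s :=
    fun f => by rw [intervalIntegral.integral_of_le hT, integral_Icc_eq_integral_Ioc]
  have hcut : ∀ f v : ℝ → ℝ,
      ∫ s in a..T, f s * (Iic t).indicator v s = ∫ s in a..t, v s * f s := fun f v => by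
    simp_rw [← indicator_mul_right, mul_comm (f _)]
    exact intervalIntegral.integral_indicator ht
  have hmem : ∀ v : ℝ → ℝ, ContinuousOn v (Icc a T) →
      MemLp ((Iic t).indicator v) 2 (volume.restrict (Icc a T)) := fun v hv =>
    (hv.memLp_restrict_of_isCompact isCompact_Icc measurableSet_Icc).indicator measurableSet_Iic
  obtain ⟨C, hC⟩ := exists_norm_le_of_forall_abs_inner_le
    (x := fun n => (hφn n).toLp (φn n)) fun z => by
      obtain ⟨C, hC⟩ := (hweak z (Lp.memLp z)).abs.bddAbove_range
      refine ⟨C, fun n => ?_⟩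
      rw [← Lp.toLp_coeFn z (Lp.memLp z), MemLp.real_inner_toLp_toLp, hint]
      exact hC ⟨n, rfl⟩
  have hlim := tendsto_inner_of_norm_le_of_tendsto hC
    (by simpa only [MemLp.real_inner_toLp_toLp, hint] using hweak _ (hmem _ hu₀))
    (tendsto_toLp_of_tendstoUniformlyOn measurableSet_Icc (fun n => hmem _ (hu n)) (hmem _ hu₀)
      (h.indicator _))
  simpa only [MemLp.real_inner_toLp_toLp, hint, hcut] using hlim

theorem stmt16_general
    (T : ℝ) (ξ : ℝ)
    (b σ : ℝ → ℝ) (Lb Lσ : NNReal)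
    (hb : LipschitzWith Lb b) (hσ : LipschitzWith Lσ σ)
    (K₀ : ℝ → ℝ)
    (φn : ℕ → ℝ → ℝ) (φ : ℝ → ℝ)
    (hφn : ∀ n, MemLp (φn n) 2 (volume.restrict (Icc (0:ℝ) T)))
    (hweak : ∀ g : ℝ → ℝ, MemLp g 2 (volume.restrict (Icc (0:ℝ) T)) →
      Tendsto (fun n => ∫ s in (0:ℝ)..T, φn n s * g s) atTop
        (nhds (∫ s in (0:ℝ)..T, φ s * g s)))
    (Yn : ℕ → ℝ → ℝ) (Z : ℝ → ℝ)
    (hYnc : ∀ n, ContinuousOn (Yn n) (Icc 0 T))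
    (hYn : ∀ n, ∀ t ∈ Icc (0:ℝ) T,
      Yn n t = ξ + (∫ s in (0:ℝ)..t, b (Yn n s)) + (∫ s in (0:ℝ)..t, σ (Yn n s) * φn n s) + K₀ t)
    (hunif : Tendsto (fun n => sSup ((fun t => |Yn n t - Z t|) '' Icc (0:ℝ) T)) atTop (nhds 0))
    (hZc : ContinuousOn Z (Icc 0 T)) :
    ∀ t ∈ Icc (0:ℝ) T,
      Z t = ξ + (∫ s in (0:ℝ)..t, b (Z s)) + (∫ s in (0:ℝ)..t, σ (Z s) * φ s) + K₀ t := by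
  intro t ht
  have hY : TendstoUniformlyOn Yn Z atTop (Icc 0 T) :=
    tendstoUniformlyOn_of_tendsto_sSup_abs_sub
      (fun n => isCompact_Icc.bddAbove_image ((hYnc n).sub hZc).abs) hunif
  have hsub : uIcc 0 t ⊆ Icc 0 T := by
    rw [uIcc_of_le ht.1]
    exact Icc_subset_Icc_right ht.2
  have hdrift : Tendsto (fun n => ∫ s in (0:ℝ)..t, b (Yn n s)) atTop
      (𝓝 (∫ s in (0:ℝ)..t, b (Z s))) :=
    TendstoUniformlyOn.tendsto_intervalIntegral_of_continuousOn
      (.of_forall fun n => (hb.continuous.comp_continuousOn (hYnc n)).mono hsub)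
      ((hb.uniformContinuous.comp_tendstoUniformlyOn hY).mono hsub)
  have hnoise := tendsto_intervalIntegral_mul_of_weak ht hφn hweak
    (fun n => hσ.continuous.comp_continuousOn (hYnc n)) (hσ.continuous.comp_continuousOn hZc)
    (hσ.uniformContinuous.comp_tendstoUniformlyOn hY)
  refine tendsto_nhds_unique (hY.tendsto_at ht) ?_
  exact (((tendsto_const_nhds.add hdrift).add hnoise).add tendsto_const_nhds).congr
    fun n => (hYn n t ht).symm

theorem stmt16
    (T : ℝ) (hT : 0 < T) (ξ : ℝ)
    (b σ : ℝ → ℝ) (Lb Lσ : NNReal)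
    (hb : LipschitzWith Lb b) (hσ : LipschitzWith Lσ σ)
    (K₀ : ℝ → ℝ) (hK₀c : ContinuousOn K₀ (Icc 0 T))
    (φn : ℕ → ℝ → ℝ) (φ : ℝ → ℝ)
    (hφn : ∀ n, MemLp (φn n) 2 (volume.restrict (Icc (0:ℝ) T)))
    (hφ : MemLp φ 2 (volume.restrict (Icc (0:ℝ) T)))
    (hweak : ∀ g : ℝ → ℝ, MemLp g 2 (volume.restrict (Icc (0:ℝ) T)) →
      Tendsto (fun n => ∫ s in (0:ℝ)..T, φn n s * g s) atTop
        (nhds (∫ s in (0:ℝ)..T, φ s * g s)))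
    (Yn : ℕ → ℝ → ℝ) (Z : ℝ → ℝ)
    (hYnc : ∀ n, ContinuousOn (Yn n) (Icc 0 T))
    (hYn : ∀ n, ∀ t ∈ Icc (0:ℝ) T,
      Yn n t = ξ + (∫ s in (0:ℝ)..t, b (Yn n s)) + (∫ s in (0:ℝ)..t, σ (Yn n s) * φn n s) + K₀ t)
    (hunif : Tendsto (fun n => sSup ((fun t => |Yn n t - Z t|) '' Icc (0:ℝ) T)) atTop (nhds 0))
    (hZc : ContinuousOn Z (Icc 0 T)) :
    ∀ t ∈ Icc (0:ℝ) T,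
      Z t = ξ + (∫ s in (0:ℝ)..t, b (Z s)) + (∫ s in (0:ℝ)..t, σ (Z s) * φ s) + K₀ t :=
  stmt16_general T ξ b σ Lb Lσ hb hσ K₀ φn φ hφn hweak Yn Z hYnc hYn hunif hZc
end
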